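/- arXiv:2203.01249 — 6 statements merged into one kernel-verified Lean document; each statement's English description precedes it below -/
import Mathlib

section
/- For every integer n ≥ 1, Σ_{m ∈ ℤ} (m² + n²)^{−3/2} = 2/n² + (8π/n)·Σ_{j=1}^∞ j·K₁(2πjn), where both sides converge absolutely. -/
open scoped BigOperators
open MeasureTheory

/-- A spin configuration on `ℤ²` (intended values `±1`). -/
abbrev SpinConfig := ℤ × ℤ → ℝ

/-- `σ` takes values in `{−1,+1}`. -/
def IsSpin (σ : SpinConfig) : Prop := ∀ x, σ x = 1 ∨ σ x = -1

/-- `σ` is `L`-periodic in both coordinate directions. -/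
def IsPeriodic (L : ℕ) (σ : SpinConfig) : Prop :=
  ∀ x : ℤ × ℤ, σ (x.1 + L, x.2) = σ x ∧ σ (x.1, x.2 + L) = σ x

/-- The box `Λ_L = {0,…,L−1}²`. -/
noncomputable def box (L : ℕ) : Finset (ℤ × ℤ) :=
  Finset.Icc (0:ℤ) ((L:ℤ) - 1) ×ˢ Finset.Icc (0:ℤ) ((L:ℤ) - 1)

/-- The dipolar kernel `1/|v|³`, interpreted as `0` at `v = 0`. -/
noncomputable def dipKer (v : ℤ × ℤ) : ℝ :=
  if v = 0 then 0 else 1 / (((v.1 : ℝ)^2 + (v.2 : ℝ)^2) ^ ((3:ℝ)/2))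

/-- The torus Hamiltonian `H_L(σ)`. -/
noncomputable def torusH (J : ℝ) (L : ℕ) (σ : SpinConfig) : ℝ :=
  -(J/2) * ∑ x ∈ box L, ∑ y ∈ box L,
      (if (x.1 - y.1)^2 + (x.2 - y.2)^2 = 1 then σ x * σ y - 1 else 0)
  + (1/2) * ∑ x ∈ box L, ∑ y ∈ box L,
      ∑' m : ℤ × ℤ, (σ x * σ y - 1) * dipKer (x.1 - y.1 + L * m.1, x.2 - y.2 + L * m.2)

/-- The energy per site `E(σ) = H_L(σ)/L²` of an `L`-periodic configuration. -/
noncomputable def energyPerSite (J : ℝ) (L : ℕ) (σ : SpinConfig) : ℝ :=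
  torusH J L σ / (L : ℝ)^2

/-- The periodic striped configuration `σ_s(h)(x) = (−1)^⌊x₂/h⌋`. -/
noncomputable def stripeConfig (h : ℕ) : SpinConfig :=
  fun x => (-1 : ℝ) ^ (Int.fdiv x.2 (h:ℤ))

/-- `E_s(h)`, the energy per site of the striped configuration of width `h`. -/
noncomputable def stripeEnergy (J : ℝ) (h : ℕ) : ℝ :=
  energyPerSite J (2*h) (stripeConfig h)

/-- The periodic checkerboard configuration `σ_c(h₁,h₂)(x) = (−1)^{⌊x₁/h₁⌋+⌊x₂/h₂⌋}`. -/
noncomputable def checkConfig (h₁ h₂ : ℕ) : SpinConfig :=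
  fun x => (-1 : ℝ) ^ (Int.fdiv x.1 (h₁:ℤ) + Int.fdiv x.2 (h₂:ℤ))

/-- `E(h₁,h₂)`, the energy per site of the checkerboard configuration. -/
noncomputable def checkEnergy (J : ℝ) (h₁ h₂ : ℕ) : ℝ :=
  energyPerSite J (2*h₁*h₂) (checkConfig h₁ h₂)

/-- The modified Bessel function `K₁(x) = (1/(2x)) ∫ e^{ixt} (t²+1)^{−3/2} dt`. -/
noncomputable def K1 (x : ℝ) : ℝ :=
  (1/(2*x)) * (∫ t : ℝ, Complex.exp (Complex.I * (x:ℂ) * (t:ℂ)) / ((t:ℂ)^2 + 1) ^ ((3:ℂ)/2)).re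

/-- `α_s = 2(1 + γ − log(π/2) + 4π Σ_{j,n ≥ 1} j K₁(2πjn))`. -/
noncomputable def alphaS : ℝ :=
  2 * (1 + Real.eulerMascheroniConstant - Real.log (Real.pi / 2)
    + 4 * Real.pi * ∑' (j : ℕ+) (n : ℕ+), (j : ℝ) * K1 (2 * Real.pi * j * n))

/-- `h*` is the unique minimizer of `h ↦ E_s(h)` over the positive integers. -/
def IsUniqueMinimizer (J : ℝ) (hstar : ℕ) : Prop :=
  0 < hstar ∧ ∀ h : ℕ, 0 < h → h ≠ hstar → stripeEnergy J hstar < stripeEnergy J h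

/-- `c_I = (2/(π√e)) e^{−α_s/2}`. -/
noncomputable def cI : ℝ := (2 / (Real.pi * Real.sqrt (Real.exp 1))) * Real.exp (-alphaS/2)

/-- `c_II(δ) = (129/(9π)) e^{−α_s/2 + 4δ}`. -/
noncomputable def cII (δ : ℝ) : ℝ := (129 / (9 * Real.pi)) * Real.exp (-alphaS/2 + 4*δ)

/-- `c_III(δ) = (2/π) e^{2 − α_s/2 − δ/4 − δ²}`. -/
noncomputable def cIII (δ : ℝ) : ℝ := (2 / Real.pi) * Real.exp (2 - alphaS/2 - δ/4 - δ^2)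

/-! Write `(m² + n²)^(-3/2) = n⁻³ g (m / n)` with `g t = (1 + t²)^(-3/2)`. Poisson summation
applies to `g (· / n)`: `g` decays like `|t|⁻³`, and since `g` is `C²` with integrable derivatives,
its Fourier transform decays like `ξ⁻²`. That Fourier transform is real and even, equals `∫ g = 2`
at `0`, and by the very definition of `K1` equals `4πξ K₁(2πξ)` for `ξ ≠ 0`; folding the sum over
`ℤ` into the term at `0` plus twice the sum over `ℕ+` gives the identity. -/

open Filter Asymptotics Topology
open scoped FourierTransform Real ComplexConjugate

theorem Asymptotics.IsBigO.comp_div_rpow {E : Type*} [Norm E] {f : ℝ → E} {b : ℝ}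
    (hf : f =O[cocompact ℝ] (|·| ^ (-b))) {a : ℝ} (ha : 0 < a) :
    (fun x ↦ f (x / a)) =O[cocompact ℝ] (|·| ^ (-b)) := by
  have ht : Tendsto (· / a) (cocompact ℝ) (cocompact ℝ) := by
    simpa only [div_eq_mul_inv] using tendsto_cocompact_mul_right₀ (inv_ne_zero ha.ne')
  refine (hf.comp_tendsto ht).trans (.of_bound (a ^ b) (.of_forall fun x ↦ le_of_eq ?_))
  rw [Function.comp_apply, Real.norm_eq_abs, Real.norm_eq_abs, abs_div, abs_of_pos ha,
    Real.div_rpow (abs_nonneg x) ha.le, Real.rpow_neg ha.le, div_inv_eq_mul, mul_comm,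
    abs_of_nonneg (Real.rpow_nonneg (abs_nonneg x) _), abs_of_nonneg (by positivity)]

section Fourier

variable {E : Type*} [NormedAddCommGroup E] [NormedSpace ℂ E]

theorem Real.fourier_comp_div (f : ℝ → E) {a : ℝ} (ha : 0 < a) (ξ : ℝ) :
    𝓕 (fun x ↦ f (x / a)) ξ = a • 𝓕 f (a * ξ) := by
  simp only [Real.fourier_real_eq]
  have h := Measure.integral_comp_div (fun y : ℝ ↦ 𝐞 (-(y * (a * ξ))) • f y) a
  rw [abs_of_pos ha] at h
  rw [← h]
  congr 1 with x
  field_simp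

theorem Real.fourier_neg_of_even {f : ℝ → E} (hf : f.Even) (ξ : ℝ) : 𝓕 f (-ξ) = 𝓕 f ξ := by
  have h := Real.fourier_comp_linearIsometry (LinearIsometryEquiv.neg ℝ) f ξ
  have hf' : f ∘ LinearIsometryEquiv.neg ℝ = f := funext hf
  rw [hf'] at h
  exact h.symm

theorem Real.conj_fourier_ofReal (f : ℝ → ℝ) (ξ : ℝ) :
    conj (𝓕 (fun x ↦ (f x : ℂ)) ξ) = 𝓕 (fun x ↦ (f x : ℂ)) (-ξ) := by
  simp only [Real.fourier_real_eq_integral_exp_smul, ← integral_conj, smul_eq_mul, map_mul,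
    Complex.conj_ofReal, ← Complex.exp_conj, Complex.conj_I]
  congr 1 with x
  push_cast
  ring_nf

theorem Real.pow_mul_norm_fourier_le {f : ℝ → E} {n : ℕ} (hf : ContDiff ℝ n f)
    (h'f : ∀ k : ℕ, k ≤ n → Integrable (iteratedDeriv k f)) (ξ : ℝ) :
    (2 * π * |ξ|) ^ n * ‖𝓕 f ξ‖ ≤ ∫ t, ‖iteratedDeriv n f t‖ := by
  have h := VectorFourier.norm_fourierIntegral_le_integral_norm 𝐞 volume (innerₗ ℝ)
    (iteratedDeriv n f) ξ
  change ‖𝓕 (iteratedDeriv n f) ξ‖ ≤ _ at h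
  rw [Real.fourier_iteratedDeriv hf (fun k hk ↦ h'f k (by exact_mod_cast hk)) le_rfl] at h
  simpa [norm_smul, abs_of_pos Real.pi_pos] using h

theorem Real.summable_fourier_mul_int [CompleteSpace E] {f : ℝ → E} (hf : ContDiff ℝ 2 f)
    (h'f : ∀ k : ℕ, k ≤ 2 → Integrable (iteratedDeriv k f)) {a : ℝ} (ha : a ≠ 0) :
    Summable fun j : ℤ ↦ 𝓕 f (a * j) := by
  set B := ∫ t, ‖iteratedDeriv 2 f t‖
  refine .of_norm_bounded_eventually
    ((Real.summable_abs_int_rpow one_lt_two).mul_left (B / (2 * π * |a|) ^ 2)) ?_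
  filter_upwards [eventually_cofinite_ne 0] with j hj
  have hj : (0 : ℝ) < |(j : ℝ)| := abs_pos.mpr (Int.cast_ne_zero.mpr hj)
  have h := Real.pow_mul_norm_fourier_le hf (by exact_mod_cast h'f) (a * j)
  rw [abs_mul, ← mul_assoc, mul_pow] at h
  rw [Real.rpow_neg hj.le, Real.rpow_two, ← div_eq_mul_inv, div_div,
    le_div_iff₀ (by positivity)]
  linarith

theorem Real.tsum_comp_div_eq_mul_tsum_fourier {f : ℝ → ℂ} (hc : Continuous f) {b : ℝ}
    (hb : 1 < b) (hf : f =O[cocompact ℝ] (|·| ^ (-b))) {a : ℝ} (ha : 0 < a)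
    (hFf : Summable fun j : ℤ ↦ 𝓕 f (a * j)) :
    ∑' m : ℤ, f (m / a) = a * ∑' j : ℤ, 𝓕 f (a * j) := by
  have hFf' : Summable fun j : ℤ ↦ 𝓕 (fun x ↦ f (x / a)) j := by
    simpa only [Real.fourier_comp_div f ha, Complex.real_smul] using hFf.mul_left (a : ℂ)
  have h := Real.tsum_eq_tsum_fourier_of_rpow_decay_of_summable (f := fun x ↦ f (x / a))
    (hc.comp (continuous_id.div_const a)) hb (hf.comp_div_rpow ha) hFf' 0
  simpa only [zero_add, QuotientAddGroup.mk_zero, fourier_eval_zero, mul_one,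
    Real.fourier_comp_div f ha, Complex.real_smul, tsum_mul_left] using h

end Fourier

theorem hasDerivAt_one_add_sq_rpow (e t : ℝ) :
    HasDerivAt (fun t : ℝ ↦ (1 + t ^ 2) ^ e) (2 * e * t * (1 + t ^ 2) ^ (e - 1)) t := by
  convert ((hasDerivAt_pow 2 t).const_add 1).rpow_const (p := e) (Or.inl (by positivity))
    using 1
  ring

theorem abs_pow_mul_one_add_sq_rpow_le (k : ℕ) (e t : ℝ) :
    |t ^ k * (1 + t ^ 2) ^ e| ≤ (1 + t ^ 2) ^ (k / 2 + e) := by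
  have hb : 0 < 1 + t ^ 2 := by positivity
  have ht : |t| ≤ √(1 + t ^ 2) := Real.abs_le_sqrt (by linarith)
  rw [abs_mul, abs_pow, abs_of_pos (Real.rpow_pos_of_pos hb e), Real.rpow_add hb]
  gcongr
  calc |t| ^ k ≤ √(1 + t ^ 2) ^ k := by gcongr
    _ = (1 + t ^ 2) ^ (k / 2 : ℝ) := by
      rw [Real.sqrt_eq_rpow, ← Real.rpow_natCast, ← Real.rpow_mul hb.le]
      ring_nf

theorem integrable_pow_mul_one_add_sq_rpow {k : ℕ} {e : ℝ} (h : k + 2 * e < -1) :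
    Integrable fun t : ℝ ↦ t ^ k * (1 + t ^ 2) ^ e := by
  have hint := integrable_rpow_neg_one_add_norm_sq (E := ℝ) (μ := volume) (r := -(k + 2 * e))
    (by simp; linarith)
  refine hint.mono' (Measurable.aestronglyMeasurable (by fun_prop)) (.of_forall fun t ↦ ?_)
  simp only [Real.norm_eq_abs, sq_abs]
  convert abs_pow_mul_one_add_sq_rpow_le k e t using 2
  ring

theorem integrable_one_add_sq_rpow {e : ℝ} (h : e < -1 / 2) :
    Integrable fun t : ℝ ↦ (1 + t ^ 2) ^ e := by
  simpa using integrable_pow_mul_one_add_sq_rpow (k := 0) (e := e) (by push_cast; linarith)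

noncomputable def dipolarProfile (t : ℝ) : ℝ := (1 + t ^ 2) ^ (-3 / 2 : ℝ)

namespace dipolarProfile

theorem even : Function.Even dipolarProfile := fun t ↦ by simp [dipolarProfile]

theorem nonneg (t : ℝ) : 0 ≤ dipolarProfile t := Real.rpow_nonneg (by positivity) _

theorem continuous : Continuous dipolarProfile := by
  unfold dipolarProfile
  exact (continuous_const.add (continuous_pow 2)).rpow_const fun t ↦
    Or.inl (by positivity : (1 : ℝ) + t ^ 2 ≠ 0)

theorem integrable : Integrable dipolarProfile := integrable_one_add_sq_rpow (by norm_num)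

theorem hasDerivAt (t : ℝ) :
    HasDerivAt dipolarProfile (-3 * (t * (1 + t ^ 2) ^ (-5 / 2 : ℝ))) t :=
  (hasDerivAt_one_add_sq_rpow (-3 / 2) t).congr_deriv (by norm_num; ring)

theorem deriv_eq : deriv dipolarProfile = fun t ↦ -3 * (t * (1 + t ^ 2) ^ (-5 / 2 : ℝ)) :=
  funext fun t ↦ (hasDerivAt t).deriv

theorem hasDerivAt_deriv (t : ℝ) :
    HasDerivAt (deriv dipolarProfile)
      (-3 * (1 + t ^ 2) ^ (-5 / 2 : ℝ) + 15 * (t ^ 2 * (1 + t ^ 2) ^ (-7 / 2 : ℝ))) t := by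
  rw [deriv_eq]
  exact (((hasDerivAt_id t).mul (hasDerivAt_one_add_sq_rpow (-5 / 2) t)).const_mul
    (-3)).congr_deriv (by norm_num; ring)

theorem contDiff_ofReal : ContDiff ℝ 2 fun t ↦ (dipolarProfile t : ℂ) :=
  Complex.ofRealCLM.contDiff.comp <| contDiff_iff_contDiffAt.mpr fun t ↦
    (contDiffAt_const.add (contDiffAt_id.pow 2)).rpow_const_of_ne (by positivity)

theorem integrable_iteratedDeriv_ofReal (k : ℕ) (hk : k ≤ 2) :
    Integrable (iteratedDeriv k fun t ↦ (dipolarProfile t : ℂ)) := by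
  have hderiv :
      deriv (fun t ↦ (dipolarProfile t : ℂ)) = fun t ↦ ((deriv dipolarProfile t : ℝ) : ℂ) :=
    funext fun t ↦ (hasDerivAt t).differentiableAt.hasDerivAt.ofReal_comp.deriv
  interval_cases k
  · exact integrable.ofReal
  · rw [iteratedDeriv_one, hderiv, deriv_eq]
    exact ((integrable_pow_mul_one_add_sq_rpow (k := 1) (e := -5 / 2) (by norm_num)).const_mul
      (-3)).ofReal.congr (.of_forall fun t ↦ by simp)
  · rw [iteratedDeriv_succ, iteratedDeriv_one, hderiv,
      funext fun t ↦ (hasDerivAt_deriv t).ofReal_comp.deriv]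
    exact (((integrable_one_add_sq_rpow (e := -5 / 2) (by norm_num)).const_mul (-3)).add
      ((integrable_pow_mul_one_add_sq_rpow (k := 2) (e := -7 / 2) (by norm_num)).const_mul
        15)).ofReal

theorem le_abs_rpow {t : ℝ} (ht : t ≠ 0) : dipolarProfile t ≤ |t| ^ (-3 : ℝ) := by
  have h : |t| ^ (-3 : ℝ) = (t ^ 2) ^ (-3 / 2 : ℝ) := by
    rw [← sq_abs, ← Real.rpow_two, ← Real.rpow_mul (abs_nonneg t)]
    norm_num
  rw [h, dipolarProfile]
  exact Real.rpow_le_rpow_of_nonpos (by positivity) (by linarith) (by norm_num)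

theorem isBigO_rpow : dipolarProfile =O[cocompact ℝ] (|·| ^ (-3 : ℝ)) := by
  refine .of_bound 1 ?_
  filter_upwards [(isCompact_singleton (x := (0 : ℝ))).compl_mem_cocompact] with t ht
  rw [one_mul, Real.norm_of_nonneg (nonneg t),
    Real.norm_of_nonneg (Real.rpow_nonneg (abs_nonneg t) _)]
  exact le_abs_rpow ht

theorem integral_eq : ∫ t, dipolarProfile t = 2 := by
  -- `sin ∘ arctan` is `t ↦ t / √(1 + t²)`, with limits `∓1` at `∓∞`.
  have hderiv (t : ℝ) : HasDerivAt (fun t ↦ Real.sin (Real.arctan t)) (dipolarProfile t) t := by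
    convert (Real.hasDerivAt_arctan t).sin using 1
    rw [Real.cos_arctan, dipolarProfile, show (-3 / 2 : ℝ) = -(1 / 2) + -1 by norm_num,
      Real.rpow_add (by positivity), Real.rpow_neg (by positivity), Real.rpow_neg_one,
      ← Real.sqrt_eq_rpow]
    ring
  have hlim {l : Filter ℝ} {θ : ℝ} (h : Tendsto Real.arctan l (𝓝 θ)) :
      Tendsto (fun t ↦ Real.sin (Real.arctan t)) l (𝓝 (Real.sin θ)) :=
    (Real.continuous_sin.tendsto θ).comp h
  rw [integral_of_hasDerivAt_of_tendsto hderiv integrable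
    (hlim (Real.tendsto_arctan_atBot.mono_right nhdsWithin_le_nhds))
    (hlim (Real.tendsto_arctan_atTop.mono_right nhdsWithin_le_nhds))]
  norm_num

theorem fourier_zero : 𝓕 (fun t ↦ (dipolarProfile t : ℂ)) 0 = 2 := by
  rw [Real.fourier_real_eq_integral_exp_smul]
  simp only [mul_zero, Complex.ofReal_zero, zero_mul, Complex.exp_zero, one_smul]
  rw [integral_complex_ofReal, integral_eq]
  norm_num

theorem fourier_neg (ξ : ℝ) :
    𝓕 (fun t ↦ (dipolarProfile t : ℂ)) (-ξ) = 𝓕 (fun t ↦ (dipolarProfile t : ℂ)) ξ :=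
  Real.fourier_neg_of_even (fun t ↦ by simp only [even t]) ξ

theorem fourier_eq_ofReal_re (ξ : ℝ) :
    𝓕 (fun t ↦ (dipolarProfile t : ℂ)) ξ = (𝓕 (fun t ↦ (dipolarProfile t : ℂ)) ξ).re :=
  (Complex.conj_eq_iff_re.mp ((Real.conj_fourier_ofReal _ ξ).trans (fourier_neg ξ))).symm

theorem ofReal_eq_one_div_cpow (t : ℝ) :
    (dipolarProfile t : ℂ) = 1 / ((t : ℂ) ^ 2 + 1) ^ (3 / 2 : ℂ) := by
  rw [dipolarProfile, Complex.ofReal_cpow (by positivity), one_div, ← Complex.cpow_neg]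
  push_cast
  ring_nf

theorem fourier_eq_K1 {ξ : ℝ} (hξ : ξ ≠ 0) :
    𝓕 (fun t ↦ (dipolarProfile t : ℂ)) ξ = ((4 * π * ξ * K1 (2 * π * ξ) : ℝ) : ℂ) := by
  have hK1 : (∫ t : ℝ, Complex.exp (Complex.I * ((2 * π * ξ : ℝ) : ℂ) * t) /
      ((t : ℂ) ^ 2 + 1) ^ (3 / 2 : ℂ)) = 𝓕 (fun t ↦ (dipolarProfile t : ℂ)) (-ξ) := by
    rw [Real.fourier_real_eq_integral_exp_smul]
    congr 1 with t
    rw [ofReal_eq_one_div_cpow, smul_eq_mul, mul_one_div]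
    push_cast
    ring_nf
  rw [K1, hK1, fourier_neg]
  conv_lhs => rw [fourier_eq_ofReal_re]
  congr 1
  field_simp
  ring

theorem summable_fourier_mul_int {a : ℝ} (ha : a ≠ 0) :
    Summable fun j : ℤ ↦ 𝓕 (fun t ↦ (dipolarProfile t : ℂ)) (a * j) :=
  Real.summable_fourier_mul_int contDiff_ofReal integrable_iteratedDeriv_ofReal ha

theorem fourier_mul_pnat {a : ℝ} (ha : 0 < a) (j : ℕ+) :
    𝓕 (fun t ↦ (dipolarProfile t : ℂ)) (a * ((j : ℤ) : ℝ)) =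
      ((4 * π * a * (j * K1 (2 * π * j * a)) : ℝ) : ℂ) := by
  rw [fourier_eq_K1 (by positivity)]
  push_cast
  ring_nf

theorem summable_mul_K1 {a : ℝ} (ha : 0 < a) :
    Summable fun j : ℕ+ ↦ (j : ℝ) * K1 (2 * π * j * a) := by
  have h := (summable_fourier_mul_int ha.ne').comp_injective
    (Nat.cast_injective.comp PNat.coe_injective : Function.Injective fun j : ℕ+ ↦ (j : ℤ))
  simp only [Function.comp_def, fourier_mul_pnat ha, Complex.summable_ofReal] at h
  exact (summable_mul_left_iff (by positivity)).mp h

theorem tsum_comp_div {a : ℝ} (ha : 0 < a) :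
    ∑' m : ℤ, dipolarProfile (m / a) =
      2 * a + 8 * π * a ^ 2 * ∑' j : ℕ+, (j : ℝ) * K1 (2 * π * j * a) := by
  have hF := summable_fourier_mul_int ha.ne'
  have hP := Real.tsum_comp_div_eq_mul_tsum_fourier (f := fun t ↦ (dipolarProfile t : ℂ))
    (Complex.continuous_ofReal.comp continuous) (by norm_num : (1 : ℝ) < 3)
    (Complex.isBigO_ofReal_left.mpr isBigO_rpow) ha hF
  rw [tsum_int_eq_zero_add_two_mul_tsum_pnat
    (fun j ↦ by simp only [Int.cast_neg, mul_neg, fourier_neg]) hF] at hP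
  simp only [Int.cast_zero, mul_zero, fourier_zero, fourier_mul_pnat ha,
    ← Complex.ofReal_tsum] at hP
  apply Complex.ofReal_injective
  rw [hP, tsum_mul_left]
  push_cast
  ring

theorem summable_comp_div {a : ℝ} (ha : 0 < a) : Summable fun m : ℤ ↦ dipolarProfile (m / a) :=
  summable_of_isBigO (Real.summable_abs_int_rpow (by norm_num : (1 : ℝ) < 3))
    ((isBigO_rpow.comp_div_rpow ha).comp_tendsto Int.tendsto_coe_cofinite)

theorem comp_div_div_pow (m : ℝ) {a : ℝ} (ha : 0 < a) :
    dipolarProfile (m / a) / a ^ 3 = 1 / ((m ^ 2 + a ^ 2) ^ ((3 : ℝ) / 2)) := by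
  have h : m ^ 2 + a ^ 2 = a ^ 2 * (1 + (m / a) ^ 2) := by field_simp; ring
  rw [dipolarProfile, h, Real.mul_rpow (by positivity) (by positivity),
    ← Real.rpow_natCast a 2, ← Real.rpow_mul ha.le, neg_div, Real.rpow_neg (by positivity)]
  norm_num
  field_simp

end dipolarProfile

/-- Poisson summation:
`Σ_{m ∈ ℤ} (m²+n²)^{−3/2} = 2/n² + (8π/n) Σ_{j≥1} j K₁(2πjn)`, both sides
converging absolutely. -/
theorem poisson_summation_dipolar :
    ∀ n : ℕ, 1 ≤ n →
    Summable (fun m : ℤ => 1 / (((m:ℝ)^2 + (n:ℝ)^2) ^ ((3:ℝ)/2))) ∧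
    Summable (fun j : ℕ+ => (j:ℝ) * K1 (2 * Real.pi * j * n)) ∧
    ∑' m : ℤ, 1 / (((m:ℝ)^2 + (n:ℝ)^2) ^ ((3:ℝ)/2))
      = 2 / (n:ℝ)^2 + (8 * Real.pi / n) * ∑' j : ℕ+, (j:ℝ) * K1 (2 * Real.pi * j * n) := by
  intro n hn
  have hn : (0 : ℝ) < n := by exact_mod_cast hn
  simp_rw [← dipolarProfile.comp_div_div_pow _ hn]
  refine ⟨(dipolarProfile.summable_comp_div hn).div_const _, dipolarProfile.summable_mul_K1 hn, ?_⟩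
  rw [tsum_div_const, dipolarProfile.tsum_comp_div hn]
  field_simp
end

section
/- There exist constants C > 0 and h₀ ∈ ℕ such that for every even integer h ≥ h₀, Σ_{n₁ ∈ ℤ} Σ_{n₂ = h/2 + 1}^{3h/2} min{n₂ − h/2, 3h/2 − n₂}/(n₁² + n₂²)^{3/2} ≤ 2·log(4/3) + C/h. -/
open scoped BigOperators
open MeasureTheory

/-!
Summing first over `n₁`, each row `∑_{n₁ ∈ ℤ} (n₁² + m²)^{-3/2}` is at most `2/m² + 1/m³`: it is
compared with `∫_ℝ (x² + m²)^{-3/2} dx = 2/m²`, whose antiderivative is `x / (m² √(x² + m²))`.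
With `h = 2H` the weight `min (n₂ - H) (3H - n₂)` is at most `H` and linear on each half of the
stripe `(H, 3H]`, so the remaining sum over `n₂` is compared with
`∫_H^{2H} (x - H)/x² dx + ∫_{2H}^{3H} (3H - x)/x² dx = log (4/3)`; every discretisation error is
`O(1/H)`.
-/

open Real Finset

lemma MonotoneOn.sum_Ico_le_sub_of_hasDerivAt {f G : ℝ → ℝ} {a b : ℕ} (hab : a ≤ b)
    (hf : MonotoneOn f (Set.Icc a b)) (hG : ∀ x ∈ Set.Icc (a : ℝ) b, HasDerivAt G (f x) x) :
    ∑ n ∈ Ico a b, f n ≤ G b - G a := by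
  have hab' : Set.uIcc (a : ℝ) b = Set.Icc (a : ℝ) b := Set.uIcc_of_le (by exact_mod_cast hab)
  calc ∑ n ∈ Ico a b, f n ≤ ∫ x in (a : ℝ)..b, f x := hf.sum_le_integral_Ico hab
    _ = G b - G a := intervalIntegral.integral_eq_sub_of_hasDerivAt (hab' ▸ hG)
        (hab' ▸ hf).intervalIntegrable

lemma AntitoneOn.sum_Ioc_le_sub_of_hasDerivAt {f G : ℝ → ℝ} {a b : ℕ} (hab : a ≤ b)
    (hf : AntitoneOn f (Set.Icc a b)) (hG : ∀ x ∈ Set.Icc (a : ℝ) b, HasDerivAt G (f x) x) :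
    ∑ n ∈ Ioc a b, f n ≤ G b - G a := by
  have hab' : Set.uIcc (a : ℝ) b = Set.Icc (a : ℝ) b := Set.uIcc_of_le (by exact_mod_cast hab)
  calc ∑ n ∈ Ioc a b, f n = ∑ i ∈ Ico a b, f ↑(i + 1) := by
        rw [← Ico_add_one_add_one_eq_Ioc, sum_Ico_add' (fun n : ℕ => f n)]
    _ ≤ ∫ x in (a : ℝ)..b, f x := hf.sum_le_integral_Ico hab
    _ = G b - G a := intervalIntegral.integral_eq_sub_of_hasDerivAt (hab' ▸ hG)
        (hab' ▸ hf).intervalIntegrable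

lemma rpow_three_halves {s : ℝ} (hs : 0 ≤ s) : s ^ (3 / 2 : ℝ) = s * √s := by
  rw [show (3 / 2 : ℝ) = 1 + 1 / 2 by norm_num, rpow_add' hs (by norm_num), rpow_one,
    ← sqrt_eq_rpow]

section InvDistCube

noncomputable def invDistCube (m x : ℝ) : ℝ := ((x ^ 2 + m ^ 2) ^ (3 / 2 : ℝ))⁻¹

lemma invDistCube_nonneg (m x : ℝ) : 0 ≤ invDistCube m x := by
  unfold invDistCube; positivity

lemma invDistCube_intCast_neg_succ (m : ℝ) (k : ℕ) :
    invDistCube m ((-(k + 1 : ℤ) : ℤ) : ℝ) = invDistCube m (k + 1 : ℕ) := by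
  push_cast
  rw [invDistCube, invDistCube, neg_sq]

lemma div_mul_sqrt_le (m x : ℝ) : x / (m ^ 2 * √(x ^ 2 + m ^ 2)) ≤ (m ^ 2)⁻¹ := by
  rcases eq_or_ne m 0 with rfl | hm
  · simp
  have : 0 < √(x ^ 2 + m ^ 2) := sqrt_pos.2 (by positivity)
  rw [div_le_iff₀ (by positivity), inv_mul_cancel_left₀ (by positivity)]
  exact (le_abs_self x).trans (abs_le_sqrt (by nlinarith))

variable {m : ℝ}

lemma invDistCube_zero (hm : 0 < m) : invDistCube m 0 = (m ^ 3)⁻¹ := by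
  rw [invDistCube, zero_pow two_ne_zero, zero_add, rpow_three_halves (by positivity),
    sqrt_sq hm.le]
  ring

lemma antitoneOn_invDistCube (hm : 0 < m) : AntitoneOn (invDistCube m) (Set.Ici 0) := by
  intro x hx y _ hxy
  have : x ^ 2 ≤ y ^ 2 := pow_le_pow_left₀ hx hxy 2
  unfold invDistCube
  gcongr

lemma hasDerivAt_div_mul_sqrt (hm : 0 < m) (x : ℝ) :
    HasDerivAt (fun x => x / (m ^ 2 * √(x ^ 2 + m ^ 2))) (invDistCube m x) x := by
  have hs : 0 < x ^ 2 + m ^ 2 := by positivity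
  have hsqrt : HasDerivAt (fun x => √(x ^ 2 + m ^ 2)) (2 * x / (2 * √(x ^ 2 + m ^ 2))) x := by
    simpa using ((hasDerivAt_pow 2 x).add_const (m ^ 2)).sqrt hs.ne'
  refine ((hasDerivAt_id x).div (hsqrt.const_mul (m ^ 2)) (by positivity)).congr_deriv ?_
  have : 0 < √(x ^ 2 + m ^ 2) := sqrt_pos.2 hs
  rw [invDistCube, rpow_three_halves hs.le]
  field_simp
  rw [id, sq_sqrt hs.le]
  ring

lemma sum_range_invDistCube_succ_le (hm : 0 < m) (N : ℕ) :
    ∑ k ∈ range N, invDistCube m (k + 1 : ℕ) ≤ (m ^ 2)⁻¹ := by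
  rw [range_eq_Ico, sum_Ico_add' (fun n : ℕ => invDistCube m n), Ico_add_one_add_one_eq_Ioc]
  refine ((antitoneOn_invDistCube hm).mono (by simp [Set.Icc_subset_Ici_self])
    |>.sum_Ioc_le_sub_of_hasDerivAt (Nat.zero_le N)
      fun x _ => hasDerivAt_div_mul_sqrt hm x).trans ?_
  simpa using div_mul_sqrt_le m N

lemma summable_invDistCube_succ (hm : 0 < m) : Summable fun k : ℕ => invDistCube m (k + 1 : ℕ) :=
  summable_of_sum_range_le (fun _ => invDistCube_nonneg _ _) (sum_range_invDistCube_succ_le hm)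

lemma summable_int_invDistCube (hm : 0 < m) : Summable fun n : ℤ => invDistCube m n := by
  have hpos := summable_invDistCube_succ hm
  exact .of_add_one_of_neg_add_one (by exact_mod_cast hpos)
    (hpos.congr fun k => (invDistCube_intCast_neg_succ m k).symm)

lemma tsum_int_invDistCube_le (hm : 0 < m) :
    ∑' n : ℤ, invDistCube m n ≤ 2 / m ^ 2 + 1 / m ^ 3 := by
  have hpos := summable_invDistCube_succ hm
  have htail := Real.tsum_le_of_sum_range_le (fun _ => invDistCube_nonneg _ _)
    (sum_range_invDistCube_succ_le hm)
  rw [tsum_of_add_one_of_neg_add_one (f := fun n : ℤ => invDistCube m n) (by exact_mod_cast hpos)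
    (hpos.congr fun k => (invDistCube_intCast_neg_succ m k).symm),
    tsum_congr (invDistCube_intCast_neg_succ m)]
  push_cast at htail ⊢
  rw [invDistCube_zero hm, div_eq_mul_inv, one_div]
  linarith

end InvDistCube

lemma tsum_sum_mul_invDistCube_le {ι : Type*} (s : Finset ι) {w m : ι → ℝ}
    (hw : ∀ i ∈ s, 0 ≤ w i) (hm : ∀ i ∈ s, 0 < m i) :
    ∑' n : ℤ, ∑ i ∈ s, w i * invDistCube (m i) n ≤ ∑ i ∈ s, w i * (2 / m i ^ 2 + 1 / m i ^ 3) := by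
  rw [Summable.tsum_finsetSum fun i hi => (summable_int_invDistCube (hm i hi)).mul_left (w i)]
  refine sum_le_sum fun i hi => ?_
  rw [tsum_mul_left]
  exact mul_le_mul_of_nonneg_left (tsum_int_invDistCube_le (hm i hi)) (hw i hi)

section Tent

/-- The weight `min{n₂ − h/2, 3h/2 − n₂}` of the statement, with `h = 2H`. -/
def tent (H x : ℝ) : ℝ := min (x - H) (3 * H - x)

lemma tent_le (H x : ℝ) : tent H x ≤ H := by
  rcases le_total x (2 * H) with h | h
  · exact (min_le_left _ _).trans (by linarith)
  · exact (min_le_right _ _).trans (by linarith)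

lemma tent_nonneg {H x : ℝ} (h₁ : H ≤ x) (h₂ : x ≤ 3 * H) : 0 ≤ tent H x :=
  le_min (by linarith) (by linarith)

variable {H : ℕ}

lemma sum_Ioc_sub_div_sq_le (hH : 0 < H) :
    ∑ n ∈ Ioc H (2 * H), ((n : ℝ) - H) / (n : ℝ) ^ 2 ≤ log 2 - 1 / 2 + 1 / (4 * H) := by
  have hH' : (0 : ℝ) < H := by exact_mod_cast hH
  set f : ℝ → ℝ := fun x => (x - H) / x ^ 2
  have hmono : MonotoneOn f (Set.Icc H (2 * H : ℕ)) := by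
    rintro x ⟨hx, -⟩ y ⟨-, hy⟩ hxy
    push_cast at hy
    have hx0 : 0 < x := hH'.trans_le hx
    have hy0 : 0 < y := hx0.trans_le hxy
    have hprod : (x - H) * (y - H) ≤ H * H :=
      mul_le_mul (by linarith) (by linarith) (by linarith) hH'.le
    simp only [f]
    rw [div_le_div_iff₀ (by positivity) (by positivity)]
    nlinarith [mul_nonneg (sub_nonneg.2 hxy) (sub_nonneg.2 hprod)]
  have hderiv : ∀ x ∈ Set.Icc (H : ℝ) (2 * H : ℕ),
      HasDerivAt (fun x => log x + H / x) (f x) x := by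
    rintro x ⟨hx, -⟩
    have hx0 : x ≠ 0 := (hH'.trans_le hx).ne'
    refine ((hasDerivAt_log hx0).add ((hasDerivAt_inv hx0).const_mul (H : ℝ))).congr_deriv ?_
    simp only [f]
    field_simp
    ring
  have hIco := hmono.sum_Ico_le_sub_of_hasDerivAt (by omega) hderiv
  -- the `Ioc` and `Ico` sums differ by `f (2H) - f H = 1/(4H) - 0`
  have hshift := (add_sum_Ioc_eq_sum_Icc (f := fun n : ℕ => f n) (by omega : H ≤ 2 * H)).trans
    (sum_Ico_add_eq_sum_Icc (f := fun n : ℕ => f n) (by omega : H ≤ 2 * H)).symm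
  simp only [f, sub_self, zero_div, zero_add] at hshift hIco
  rw [hshift]
  push_cast at hIco ⊢
  have hG2H : (H : ℝ) / (2 * H) = 1 / 2 := by field_simp
  have hf2H : (2 * H - H : ℝ) / (2 * H) ^ 2 = 1 / (4 * H) := by field_simp; ring
  rw [log_mul two_ne_zero hH'.ne', div_self hH'.ne', hG2H] at hIco
  rw [hf2H]
  linarith

lemma sum_Ioc_three_sub_div_sq_le (hH : 0 < H) :
    ∑ n ∈ Ioc (2 * H) (3 * H), (3 * H - (n : ℝ)) / (n : ℝ) ^ 2 ≤ 1 / 2 + log 2 - log 3 := by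
  have hH' : (0 : ℝ) < H := by exact_mod_cast hH
  set f : ℝ → ℝ := fun x => (3 * H - x) / x ^ 2
  have hanti : AntitoneOn f (Set.Icc (2 * H : ℕ) (3 * H : ℕ)) := by
    rintro x ⟨hx, -⟩ y ⟨-, hy⟩ hxy
    push_cast at hx hy
    have hx0 : 0 < x := by linarith
    have hy0 : 0 < y := hx0.trans_le hxy
    simp only [f]
    rw [div_le_div_iff₀ (by positivity) (by positivity)]
    nlinarith [mul_nonneg (sub_nonneg.2 hxy) hx0.le, mul_nonneg (sub_nonneg.2 hxy) (sub_nonneg.2 hy)]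
  have hderiv : ∀ x ∈ Set.Icc ((2 * H : ℕ) : ℝ) (3 * H : ℕ),
      HasDerivAt (fun x => -(3 * H / x + log x)) (f x) x := by
    rintro x ⟨hx, -⟩
    push_cast at hx
    have hx0 : x ≠ 0 := (by linarith : 0 < x).ne'
    refine (((hasDerivAt_inv hx0).const_mul (3 * H : ℝ)).add (hasDerivAt_log hx0)).neg.congr_deriv ?_
    simp only [f]
    field_simp
    ring
  refine (hanti.sum_Ioc_le_sub_of_hasDerivAt (by omega) hderiv).trans_eq ?_
  push_cast
  rw [log_mul (by norm_num) hH'.ne', log_mul (by norm_num) hH'.ne']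
  field_simp
  ring

lemma sum_tent_div_sq_le (hH : 0 < H) :
    ∑ n ∈ Ioc H (3 * H), tent H n / (n : ℝ) ^ 2 ≤ log (4 / 3) + 1 / (4 * H) := by
  rw [← sum_Ioc_consecutive _ (by omega : H ≤ 2 * H) (by omega : 2 * H ≤ 3 * H)]
  have hlow : ∀ n ∈ Ioc H (2 * H), tent H n / (n : ℝ) ^ 2 = ((n : ℝ) - H) / (n : ℝ) ^ 2 := by
    intro n hn
    have : (n : ℝ) ≤ 2 * H := by exact_mod_cast (mem_Ioc.1 hn).2
    rw [tent, min_eq_left (by linarith)]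
  have hhigh : ∀ n ∈ Ioc (2 * H) (3 * H),
      tent H n / (n : ℝ) ^ 2 = (3 * H - (n : ℝ)) / (n : ℝ) ^ 2 := by
    intro n hn
    have : 2 * (H : ℝ) ≤ n := by exact_mod_cast (mem_Ioc.1 hn).1.le
    rw [tent, min_eq_right (by linarith)]
  rw [sum_congr rfl hlow, sum_congr rfl hhigh, show (4 / 3 : ℝ) = 2 ^ 2 / 3 by norm_num,
    log_div (by norm_num) (by norm_num), log_pow]
  linarith [sum_Ioc_sub_div_sq_le hH, sum_Ioc_three_sub_div_sq_le hH]

lemma sum_tent_div_cube_le (hH : 0 < H) :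
    ∑ n ∈ Ioc H (3 * H), tent H n / (n : ℝ) ^ 3 ≤ 2 / H := by
  have hH' : (0 : ℝ) < H := by exact_mod_cast hH
  have hterm : ∀ n ∈ Ioc H (3 * H), tent H n / (n : ℝ) ^ 3 ≤ H / (H : ℝ) ^ 3 := by
    intro n hn
    have hHn : (H : ℝ) ≤ n := by exact_mod_cast (mem_Ioc.1 hn).1.le
    exact div_le_div₀ hH'.le (tent_le _ _) (by positivity) (pow_le_pow_left₀ hH'.le hHn 3)
  refine (sum_le_card_nsmul _ _ _ hterm).trans_eq ?_
  rw [Nat.card_Ioc, nsmul_eq_mul, show 3 * H - H = 2 * H by omega]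
  push_cast
  field_simp

lemma sum_tent_mul_le (hH : 0 < H) :
    ∑ n ∈ Ioc H (3 * H), tent H n * (2 / (n : ℝ) ^ 2 + 1 / (n : ℝ) ^ 3)
      ≤ 2 * log (4 / 3) + 5 / (2 * H) := by
  have hsplit : ∀ n ∈ Ioc H (3 * H), tent H n * (2 / (n : ℝ) ^ 2 + 1 / (n : ℝ) ^ 3)
      = 2 * (tent H n / (n : ℝ) ^ 2) + tent H n / (n : ℝ) ^ 3 := fun n _ => by ring
  rw [sum_congr rfl hsplit, sum_add_distrib, ← mul_sum]
  have : (5 : ℝ) / (2 * H) = 2 * (1 / (4 * H)) + 2 / H := by field_simp; ring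
  linarith [sum_tent_div_sq_le hH, sum_tent_div_cube_le hH]

end Tent

/-- upper bound on the tile–distant-stripe interaction:
`Σ_{n₁∈ℤ} Σ_{n₂=h/2+1}^{3h/2} min{n₂−h/2, 3h/2−n₂}/(n₁²+n₂²)^{3/2} ≤ 2 log(4/3) + C/h`. -/
theorem tile_distant_stripe_upper_bound :
    ∃ C > (0:ℝ), ∃ h₀ : ℕ, ∀ h : ℕ, h₀ ≤ h → Even h →
    ∑' n₁ : ℤ, ∑ n₂ ∈ Finset.Icc (h/2 + 1) (3*h/2),
        min ((n₂:ℝ) - (h:ℝ)/2) (3*(h:ℝ)/2 - (n₂:ℝ)) / (((n₁:ℝ)^2 + (n₂:ℝ)^2) ^ ((3:ℝ)/2))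
      ≤ 2 * Real.log (4/3) + C / h := by
  refine ⟨5, by norm_num, 1, fun h hh ⟨H, hH⟩ => ?_⟩
  subst hH
  have hH : 0 < H := by omega
  have hrange : Icc ((H + H) / 2 + 1) (3 * (H + H) / 2) = Ioc H (3 * H) := by
    rw [show (H + H) / 2 = H by omega, show 3 * (H + H) / 2 = 3 * H by omega,
      Icc_add_one_left_eq_Ioc]
  have hcast : ((H + H : ℕ) : ℝ) = 2 * H := by push_cast; ring
  have hstripe : ∀ n ∈ Ioc H (3 * H), (H : ℝ) ≤ n ∧ (n : ℝ) ≤ 3 * H := fun n hn =>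
    ⟨by exact_mod_cast (mem_Ioc.1 hn).1.le, by exact_mod_cast (mem_Ioc.1 hn).2⟩
  calc _ = ∑' n₁ : ℤ, ∑ n₂ ∈ Ioc H (3 * H), tent H n₂ * invDistCube n₂ n₁ := by
        refine tsum_congr fun n₁ => sum_congr hrange fun n₂ _ => ?_
        rw [hcast, div_eq_mul_inv, tent, invDistCube, add_comm ((n₁ : ℝ) ^ 2)]
        congr 2 <;> ring
    _ ≤ ∑ n ∈ Ioc H (3 * H), tent H n * (2 / (n : ℝ) ^ 2 + 1 / (n : ℝ) ^ 3) :=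
        tsum_sum_mul_invDistCube_le _ (fun n hn => tent_nonneg (hstripe n hn).1 (hstripe n hn).2)
          fun n hn => (Nat.cast_pos.2 hH).trans_le (hstripe n hn).1
    _ ≤ 2 * log (4 / 3) + 5 / ((H + H : ℕ) : ℝ) := by
        rw [hcast]
        exact sum_tent_mul_le hH
end

section
/- There exists h₀ ∈ ℕ such that for all integers h₁ ≥ h₂ ≥ h₀ with h₂ even, (1/h₁)·Σ_{n₁=1}^∞ min{n₁, h₁} · Σ_{n₂=1}^{h₂} min{n₂, h₂ − n₂}/(n₁² + n₂²)^{3/2} < 2·h₂/h₁. -/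
open scoped BigOperators
open MeasureTheory

/-! Bound `min n₁ h₁ ≤ n₁` and sum over `n₁` first: comparing with the telescoping series of
`(n₁² + n₂²)^{-1/2}` gives `Σ_{n₁ ≥ 1} n₁ / (n₁² + n₂²)^{3/2} ≤ 2 / n₂`, so the double sum is at most
`2 Σ_{n₂=1}^{h₂} min{n₂, h₂ − n₂} / n₂ ≤ 2 (h₂ − 1)`, the top term `n₂ = h₂` vanishing. -/

lemma Real.rpow_three_halves_eq_sqrt_pow {x : ℝ} (hx : 0 ≤ x) :
    x ^ ((3:ℝ)/2) = Real.sqrt x ^ 3 := by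
  rw [Real.sqrt_eq_rpow, ← Real.rpow_natCast, ← Real.rpow_mul hx]
  norm_num

lemma div_rpow_three_halves_le_sub_inv_sqrt {x c : ℝ} (hx : 0 ≤ x) (hc : 0 < c) :
    (x + 1) / ((x + 1)^2 + c^2) ^ ((3:ℝ)/2)
      ≤ 2 * (1 / Real.sqrt (x^2 + c^2) - 1 / Real.sqrt ((x + 1)^2 + c^2)) := by
  set A := Real.sqrt (x^2 + c^2)
  set B := Real.sqrt ((x + 1)^2 + c^2)
  have hA : 0 < A := Real.sqrt_pos.2 (by positivity)
  have hB : 0 < B := Real.sqrt_pos.2 (by positivity)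
  have hAB : A ≤ B := Real.sqrt_le_sqrt (by nlinarith)
  have hsq : B^2 - A^2 = 2 * x + 1 := by
    rw [Real.sq_sqrt (by positivity), Real.sq_sqrt (by positivity)]
    ring
  rw [Real.rpow_three_halves_eq_sqrt_pow (by positivity)]
  calc (x + 1) / B^3 ≤ 2 * ((2 * x + 1) / (B * B * (B + B))) := by
        rw [mul_div_assoc', div_le_div_iff₀ (by positivity) (by positivity)]
        nlinarith [pow_pos hB 3]
    _ ≤ 2 * ((B^2 - A^2) / (A * B * (A + B))) := by
        rw [hsq]
        gcongr
    _ = 2 * (1 / A - 1 / B) := by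
        field_simp
        ring

lemma sum_Icc_div_rpow_three_halves_le {c : ℝ} (hc : 0 < c) (N : ℕ) :
    ∑ n ∈ Finset.Icc 1 N, (n:ℝ) / ((n:ℝ)^2 + c^2) ^ ((3:ℝ)/2) ≤ 2 / c := by
  set f : ℕ → ℝ := fun k => 1 / Real.sqrt ((k:ℝ)^2 + c^2)
  have hf0 : f 0 = 1 / c := by simp [f, Real.sqrt_sq hc.le]
  calc ∑ n ∈ Finset.Icc 1 N, (n:ℝ) / ((n:ℝ)^2 + c^2) ^ ((3:ℝ)/2)
      = ∑ k ∈ Finset.range N, ((k:ℝ) + 1) / (((k:ℝ) + 1)^2 + c^2) ^ ((3:ℝ)/2) := by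
        rw [← Finset.Ico_add_one_right_eq_Icc, Finset.sum_Ico_eq_sum_range]
        simp only [Nat.cast_add, Nat.cast_one, add_comm (1:ℝ), Nat.add_sub_cancel]
    _ ≤ ∑ k ∈ Finset.range N, 2 * (f k - f (k + 1)) :=
        Finset.sum_le_sum fun k _ => by
          simpa [f] using div_rpow_three_halves_le_sub_inv_sqrt (Nat.cast_nonneg k) hc
    _ = 2 * (f 0 - f N) := by rw [← Finset.mul_sum, Finset.sum_range_sub']
    _ ≤ 2 / c := by
        have : 0 ≤ f N := by positivity
        rw [hf0]
        linarith [div_eq_mul_one_div 2 c]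

lemma sum_pnat_div_rpow_three_halves_le {c : ℝ} (hc : 0 < c) (s : Finset ℕ+) :
    ∑ n ∈ s, (n:ℝ) / ((n:ℝ)^2 + c^2) ^ ((3:ℝ)/2) ≤ 2 / c := by
  classical
  set t := s.image ((↑) : ℕ+ → ℕ)
  rw [← Finset.sum_image (g := ((↑) : ℕ+ → ℕ))
    (f := fun n : ℕ => (n:ℝ) / ((n:ℝ)^2 + c^2) ^ ((3:ℝ)/2)) fun a _ b _ h => PNat.coe_injective h]
  refine le_trans (Finset.sum_le_sum_of_subset_of_nonneg ?_ fun _ _ _ => by positivity)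
    (sum_Icc_div_rpow_three_halves_le hc (t.sup id))
  intro m hm
  obtain ⟨p, -, rfl⟩ := Finset.mem_image.1 hm
  exact Finset.mem_Icc.2 ⟨p.pos, Finset.le_sup (f := id) hm⟩

lemma sum_Icc_min_sub_div_le {h : ℕ} (hh : 1 ≤ h) :
    ∑ n ∈ Finset.Icc 1 h, min (n:ℝ) ((h:ℝ) - n) / n ≤ (h:ℝ) - 1 := by
  obtain ⟨k, rfl⟩ : ∃ k, h = k + 1 := ⟨h - 1, by omega⟩
  rw [Finset.sum_Icc_succ_top hh, sub_self, min_eq_right (by positivity), zero_div, add_zero]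
  calc ∑ n ∈ Finset.Icc 1 k, min (n:ℝ) (((k + 1 : ℕ):ℝ) - n) / n
      ≤ ∑ _n ∈ Finset.Icc 1 k, (1:ℝ) :=
        Finset.sum_le_sum fun n _ => div_le_one_of_le₀ (min_le_left _ _) n.cast_nonneg
    _ = ((k + 1 : ℕ):ℝ) - 1 := by simp

lemma sum_corner_interaction_le (h₁ : ℝ) {h₂ : ℕ} (s : Finset ℕ+) :
    ∑ n₁ ∈ s, min (n₁:ℝ) h₁ *
        ∑ n₂ ∈ Finset.Icc 1 h₂, min (n₂:ℝ) ((h₂:ℝ) - n₂) / ((n₁:ℝ)^2 + (n₂:ℝ)^2) ^ ((3:ℝ)/2)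
      ≤ 2 * ∑ n₂ ∈ Finset.Icc 1 h₂, min (n₂:ℝ) ((h₂:ℝ) - n₂) / n₂ := by
  have hmin : ∀ n₂ ∈ Finset.Icc 1 h₂, 0 ≤ min (n₂:ℝ) ((h₂:ℝ) - n₂) := fun n₂ hn₂ =>
    le_min n₂.cast_nonneg (sub_nonneg.2 (mod_cast (Finset.mem_Icc.1 hn₂).2))
  calc ∑ n₁ ∈ s, min (n₁:ℝ) h₁ *
        ∑ n₂ ∈ Finset.Icc 1 h₂, min (n₂:ℝ) ((h₂:ℝ) - n₂) / ((n₁:ℝ)^2 + (n₂:ℝ)^2) ^ ((3:ℝ)/2)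
      ≤ ∑ n₁ ∈ s, (n₁:ℝ) *
        ∑ n₂ ∈ Finset.Icc 1 h₂, min (n₂:ℝ) ((h₂:ℝ) - n₂) / ((n₁:ℝ)^2 + (n₂:ℝ)^2) ^ ((3:ℝ)/2) :=
        Finset.sum_le_sum fun n₁ _ => mul_le_mul_of_nonneg_right (min_le_left _ _)
          (Finset.sum_nonneg fun n₂ hn₂ => div_nonneg (hmin n₂ hn₂) (by positivity))
    _ = ∑ n₂ ∈ Finset.Icc 1 h₂, min (n₂:ℝ) ((h₂:ℝ) - n₂) *
          ∑ n₁ ∈ s, (n₁:ℝ) / ((n₁:ℝ)^2 + (n₂:ℝ)^2) ^ ((3:ℝ)/2) := by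
        simp only [Finset.mul_sum]
        rw [Finset.sum_comm]
        exact Finset.sum_congr rfl fun _ _ => Finset.sum_congr rfl fun _ _ => by ring
    _ ≤ ∑ n₂ ∈ Finset.Icc 1 h₂, min (n₂:ℝ) ((h₂:ℝ) - n₂) * (2 / n₂) :=
        Finset.sum_le_sum fun n₂ hn₂ => mul_le_mul_of_nonneg_left
          (sum_pnat_div_rpow_three_halves_le (mod_cast (Finset.mem_Icc.1 hn₂).1) s) (hmin n₂ hn₂)
    _ = 2 * ∑ n₂ ∈ Finset.Icc 1 h₂, min (n₂:ℝ) ((h₂:ℝ) - n₂) / n₂ := by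
        rw [Finset.mul_sum]
        exact Finset.sum_congr rfl fun _ _ => by ring

/-- the corner interaction bound
`(1/h₁) Σ_{n₁≥1} min{n₁,h₁} Σ_{n₂=1}^{h₂} min{n₂,h₂−n₂}/(n₁²+n₂²)^{3/2} < 2h₂/h₁`. -/
theorem corner_interaction_bound :
    ∃ h₀ : ℕ, ∀ h₁ h₂ : ℕ, h₀ ≤ h₂ → h₂ ≤ h₁ → Even h₂ →
    (1/(h₁:ℝ)) * ∑' n₁ : ℕ+, min (n₁:ℝ) (h₁:ℝ) *
        ∑ n₂ ∈ Finset.Icc 1 h₂,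
          min (n₂:ℝ) ((h₂:ℝ) - (n₂:ℝ)) / (((n₁:ℝ)^2 + (n₂:ℝ)^2) ^ ((3:ℝ)/2))
      < 2 * (h₂:ℝ) / (h₁:ℝ) := by
  refine ⟨1, fun h₁ h₂ hh₂ hle _ => ?_⟩
  have hh₁ : (0:ℝ) < h₁ := mod_cast hh₂.trans hle
  have hsum : ∑' n₁ : ℕ+, min (n₁:ℝ) (h₁:ℝ) *
        ∑ n₂ ∈ Finset.Icc 1 h₂,
          min (n₂:ℝ) ((h₂:ℝ) - (n₂:ℝ)) / (((n₁:ℝ)^2 + (n₂:ℝ)^2) ^ ((3:ℝ)/2))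
      ≤ 2 * ((h₂:ℝ) - 1) := by
    have h₂_ge : (1:ℝ) ≤ h₂ := mod_cast hh₂
    refine tsum_le_of_sum_le' (by linarith) fun s => ?_
    calc _ ≤ _ := sum_corner_interaction_le (h₁:ℝ) s
      _ ≤ 2 * ((h₂:ℝ) - 1) := by gcongr; exact sum_Icc_min_sub_div_le hh₂
  calc _ ≤ 1 / (h₁:ℝ) * (2 * ((h₂:ℝ) - 1)) := by gcongr
    _ < 2 * (h₂:ℝ) / h₁ := by
        rw [one_div_mul_eq_div]
        gcongr
        linarith
end

section
/- There exists h₀ ∈ ℕ such that for all integers h₁ ≥ h₂ ≥ h₀, (1/h₂)·Σ_{n₁ = h₂+1}^∞ min{n₁ − h₂, h₁ − h₂} · Σ_{n₂ = −h₂}^{h₂} (h₂ − |n₂|)/(n₁² + n₂²)^{3/2} ≤ 1/2 + h₂/(2h₁). -/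
open scoped BigOperators
open MeasureTheory

/-!
Bounding `(n² + m²)^{-3/2}` by `n⁻³` and using `∑_{|m| ≤ h} (h - |m|) = h²` bounds the inner sum
by `h²/n³`. Replacing the minimum by `n - h`, the series `∑_{n > h} (n - h) h²/n³` is dominated
by a telescoping one whose value is at most `h/2`, so the left side is at most `1/2`.
-/

open Finset

lemma tsum_le_of_le_sub_succ {f g : ℕ → ℝ} (hf : ∀ n, 0 ≤ f n) (hg : ∀ n, 0 ≤ g n)
    (hfg : ∀ n, f n ≤ g n - g (n + 1)) : ∑' n, f n ≤ g 0 :=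
  Real.tsum_le_of_sum_range_le hf fun N =>
    calc ∑ n ∈ range N, f n ≤ ∑ n ∈ range N, (g n - g (n + 1)) := sum_le_sum fun n _ => hfg n
      _ = g 0 - g N := sum_range_sub' g N
      _ ≤ g 0 := sub_le_self _ (hg N)

lemma sum_Icc_neg_sub_abs (h : ℕ) :
    ∑ m ∈ Icc (-(h : ℤ)) h, ((h : ℝ) - |(m : ℝ)|) = (h : ℝ) ^ 2 := by
  induction h with
  | zero => simp
  | succ k ih =>
    have hIcc : Icc (-((k + 1 : ℕ) : ℤ)) (k + 1 : ℕ)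
        = insert (-((k : ℤ) + 1)) (insert ((k : ℤ) + 1) (Icc (-(k : ℤ)) k)) := by
      ext x; simp only [mem_Icc, mem_insert]; omega
    have hcard : #(Icc (-(k : ℤ)) k) = 2 * k + 1 := by simp; omega
    have hshift : ∀ m : ℤ, ((k + 1 : ℕ) : ℝ) - |(m : ℝ)| = ((k : ℝ) - |(m : ℝ)|) + 1 := by
      intro m; push_cast; ring
    rw [hIcc, sum_insert (by simp; omega), sum_insert (by simp),
      sum_congr rfl fun m _ => hshift m, sum_add_distrib, ih, sum_const, hcard]
    push_cast
    rw [abs_neg, abs_of_nonneg (by positivity)]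
    ring

/-- `h - |m|` counts the pairs of sites at vertical offset `m` in two columns of height `h`. -/
noncomputable def stripeWeight (h : ℕ) (x : ℝ) : ℝ :=
  ∑ m ∈ Icc (-(h : ℤ)) h, ((h : ℝ) - |(m : ℝ)|) / ((x ^ 2 + (m : ℝ) ^ 2) ^ ((3 : ℝ) / 2))

lemma sub_abs_nonneg_of_mem_Icc {h : ℕ} {m : ℤ} (hm : m ∈ Icc (-(h : ℤ)) h) :
    0 ≤ (h : ℝ) - |(m : ℝ)| := by
  rw [mem_Icc] at hm
  rw [sub_nonneg, abs_le]
  exact ⟨by exact_mod_cast hm.1, by exact_mod_cast hm.2⟩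

lemma stripeWeight_nonneg (h : ℕ) (x : ℝ) : 0 ≤ stripeWeight h x :=
  sum_nonneg fun _ hm => div_nonneg (sub_abs_nonneg_of_mem_Icc hm) (by positivity)

lemma stripeWeight_le {x : ℝ} (hx : 0 < x) (h : ℕ) : stripeWeight h x ≤ (h : ℝ) ^ 2 / x ^ 3 := by
  have hcube : x ^ 3 = (x ^ 2) ^ ((3 : ℝ) / 2) := by
    rw [← Real.rpow_natCast x 2, ← Real.rpow_mul hx.le, ← Real.rpow_natCast x 3]
    norm_num
  calc stripeWeight h x ≤ ∑ m ∈ Icc (-(h : ℤ)) h, ((h : ℝ) - |(m : ℝ)|) / x ^ 3 := by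
        refine sum_le_sum fun m hm => div_le_div_of_nonneg_left (sub_abs_nonneg_of_mem_Icc hm)
          (by positivity) ?_
        rw [hcube]
        gcongr
        exact le_add_of_nonneg_right (sq_nonneg _)
    _ = (h : ℝ) ^ 2 / x ^ 3 := by rw [← sum_div, sum_Icc_neg_sub_abs]

/-- A telescoping majorant: `2a²/(2x-1)` telescopes `a²/(x² - 1/4) ≥ a²/x²` and
`a³/(2x²-2x+1)` telescopes `4xa³/(4x⁴+1) ≤ a³/x³`, so that the differences dominate
`(x - a) a²/x³`; summing over `x > a` is the discrete form of `a ∫₁^∞ (t-1)/t³ dt = a/2`. -/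
noncomputable def tailMajorant (a x : ℝ) : ℝ :=
  2 * a ^ 2 / (2 * x - 1) - a ^ 3 / (2 * x ^ 2 - 2 * x + 1)

lemma tailMajorant_nonneg {a x : ℝ} (ha : 0 ≤ a) (hax : a + 1 ≤ x) : 0 ≤ tailMajorant a x := by
  have d1 : 0 < 2 * x - 1 := by linarith
  have d2 : 0 < 2 * x ^ 2 - 2 * x + 1 := by nlinarith
  unfold tailMajorant
  rw [sub_nonneg, div_le_div_iff₀ d2 d1]
  have h1 : a * (2 * x - 1) ≤ (x - 1) * (2 * x - 1) := by gcongr; linarith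
  nlinarith [mul_le_mul_of_nonneg_left h1 (sq_nonneg a),
    mul_nonneg (sq_nonneg a) (show 0 ≤ 2 * x ^ 2 - x + 1 by nlinarith)]

lemma tailMajorant_start_le {a : ℝ} (ha : 0 ≤ a) : tailMajorant a (a + 1) ≤ a / 2 := by
  have d1 : 0 < 2 * (a + 1) - 1 := by linarith
  have d2 : 0 < 2 * (a + 1) ^ 2 - 2 * (a + 1) + 1 := by nlinarith
  unfold tailMajorant
  rw [div_sub_div _ _ d1.ne' d2.ne', div_le_div_iff₀ (by positivity) two_pos]
  nlinarith

lemma mul_div_cube_le_tailMajorant_sub {a x : ℝ} (ha : 0 ≤ a) (hax : a + 1 ≤ x) :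
    (x - a) * (a ^ 2 / x ^ 3) ≤ tailMajorant a x - tailMajorant a (x + 1) := by
  have hx : 0 < x := by linarith
  have d1 : 0 < 2 * x - 1 := by linarith
  have d2 : 0 < 2 * x ^ 2 - 2 * x + 1 := by nlinarith
  have square_le : a ^ 2 / x ^ 2 ≤ 2 * a ^ 2 / (2 * x - 1) - 2 * a ^ 2 / (2 * (x + 1) - 1) := by
    rw [div_sub_div _ _ d1.ne' (by linarith), div_le_div_iff₀ (by positivity) (by nlinarith)]
    nlinarith [sq_nonneg a]
  have cube_ge : a ^ 3 / (2 * x ^ 2 - 2 * x + 1) - a ^ 3 / (2 * (x + 1) ^ 2 - 2 * (x + 1) + 1)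
      ≤ a ^ 3 / x ^ 3 := by
    rw [div_sub_div _ _ d2.ne' (by nlinarith), div_le_div_iff₀ (by nlinarith) (by positivity)]
    nlinarith [pow_nonneg ha 3, pow_pos hx 3]
  have expand : (x - a) * (a ^ 2 / x ^ 3) = a ^ 2 / x ^ 2 - a ^ 3 / x ^ 3 := by field_simp
  unfold tailMajorant
  linarith

noncomputable def halfStripeTerm (h₁ h₂ n : ℕ) : ℝ :=
  if h₂ < n then min ((n : ℝ) - h₂) ((h₁ : ℝ) - h₂) * stripeWeight h₂ n else 0

section HalfStripe

variable {h₁ h₂ : ℕ}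

lemma halfStripeTerm_nonneg (h : h₂ ≤ h₁) (n : ℕ) : 0 ≤ halfStripeTerm h₁ h₂ n := by
  unfold halfStripeTerm
  split_ifs with hn
  · have hn' : (h₂ : ℝ) < n := by exact_mod_cast hn
    have h' : (h₂ : ℝ) ≤ h₁ := by exact_mod_cast h
    exact mul_nonneg (le_min (by linarith) (by linarith)) (stripeWeight_nonneg _ _)
  · exact le_rfl

lemma halfStripeTerm_le_tailMajorant_sub (n : ℕ) :
    halfStripeTerm h₁ h₂ n ≤ tailMajorant h₂ (max (n : ℝ) (h₂ + 1))
      - tailMajorant h₂ (max ((n + 1 : ℕ) : ℝ) (h₂ + 1)) := by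
  unfold halfStripeTerm
  split_ifs with hn
  · have hn' : (h₂ : ℝ) + 1 ≤ n := by exact_mod_cast hn
    rw [max_eq_left hn', max_eq_left (by push_cast; linarith), Nat.cast_succ]
    calc min ((n : ℝ) - h₂) ((h₁ : ℝ) - h₂) * stripeWeight h₂ n
        ≤ ((n : ℝ) - h₂) * ((h₂ : ℝ) ^ 2 / (n : ℝ) ^ 3) :=
          mul_le_mul (min_le_left _ _) (stripeWeight_le (by linarith) h₂)
            (stripeWeight_nonneg _ _) (by linarith)
      _ ≤ _ := mul_div_cube_le_tailMajorant_sub h₂.cast_nonneg hn'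
  · have hn' : (n : ℝ) ≤ h₂ := by exact_mod_cast not_lt.mp hn
    rw [max_eq_right (by linarith), max_eq_right (by push_cast; linarith), sub_self]

lemma tsum_halfStripeTerm_le (h : h₂ ≤ h₁) : ∑' n, halfStripeTerm h₁ h₂ n ≤ (h₂ : ℝ) / 2 := by
  have hmax : ∀ n : ℕ, (h₂ : ℝ) + 1 ≤ max (n : ℝ) (h₂ + 1) := fun n => le_max_right _ _
  calc ∑' n, halfStripeTerm h₁ h₂ n ≤ tailMajorant h₂ (max ((0 : ℕ) : ℝ) (h₂ + 1)) :=
        tsum_le_of_le_sub_succ (halfStripeTerm_nonneg h)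
          (fun n => tailMajorant_nonneg h₂.cast_nonneg (hmax n))
          halfStripeTerm_le_tailMajorant_sub
    _ = tailMajorant h₂ (h₂ + 1) := by rw [max_eq_right (by simp; positivity)]
    _ ≤ (h₂ : ℝ) / 2 := tailMajorant_start_le h₂.cast_nonneg

end HalfStripe

/-- the rectangle–aligned-half-stripe interaction bound
`(1/h₂) Σ_{n₁>h₂} min{n₁−h₂,h₁−h₂} Σ_{n₂=−h₂}^{h₂} (h₂−|n₂|)/(n₁²+n₂²)^{3/2} ≤ 1/2 + h₂/(2h₁)`. -/
theorem aligned_halfstripe_bound :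
    ∃ h₀ : ℕ, ∀ h₁ h₂ : ℕ, h₀ ≤ h₂ → h₂ ≤ h₁ →
    (1/(h₂:ℝ)) * ∑' n₁ : ℕ,
        (if h₂ < n₁ then
          min ((n₁:ℝ) - (h₂:ℝ)) ((h₁:ℝ) - (h₂:ℝ)) *
            ∑ n₂ ∈ Finset.Icc (-(h₂:ℤ)) (h₂:ℤ),
              ((h₂:ℝ) - |(n₂:ℝ)|) / (((n₁:ℝ)^2 + (n₂:ℝ)^2) ^ ((3:ℝ)/2))
        else 0)
      ≤ 1/2 + (h₂:ℝ) / (2*(h₁:ℝ)) := by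
  refine ⟨0, fun h₁ h₂ _ h => ?_⟩
  change 1 / (h₂ : ℝ) * ∑' n, halfStripeTerm h₁ h₂ n ≤ _
  calc 1 / (h₂ : ℝ) * ∑' n, halfStripeTerm h₁ h₂ n ≤ 1 / (h₂ : ℝ) * ((h₂ : ℝ) / 2) := by
        gcongr
        exact tsum_halfStripeTerm_le h
    _ = ((h₂ : ℝ) / h₂) / 2 := by ring
    _ ≤ 1 / 2 := by gcongr; exact div_self_le_one _
    _ ≤ 1 / 2 + (h₂ : ℝ) / (2 * (h₁ : ℝ)) := le_add_of_nonneg_right (by positivity)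
end

section
/- There exists h₀ ∈ ℕ such that for every integer h ≥ h₀, (1/h)·Σ_{n₁=1}^∞ min{n₁, h} · Σ_{n₂ = 2h+1}^∞ min{n₂ − 2h, h}/(n₁² + n₂²)^{3/2} ≥ 0.36. -/
open scoped BigOperators
open MeasureTheory

/-!
Write `ψ(x, y) = (x² + y²)^(-3/2)`. Both weights are layer cakes,
`min n h = #{j ∈ (0, h] : j ≤ n}` and `min (m - 2h) h = #{k ∈ (2h, 3h] : k ≤ m}`, so the sum is
`Σ_{j ≤ h} Σ_{2h < k ≤ 3h} Σ_{n ≥ j} Σ_{m ≥ k} ψ(n, m)`. For a decreasing summand a tail sum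
`Σ_{n ≥ k} f n` dominates `∫_k^∞ f`; applied in `m` and then in `n`, this bounds the quadrant sum
below by the explicit integral `2 / (j + k + √(j² + k²)) ≥ 1/k - j/(2k²)`. Summing over `j`
leaves `Σ_k (h/k - h(h+1)/(4k²))`, again compared with an integral, and
`log ((3h+1)/(2h+1))` is bounded through the first two terms of the series of
`log ((1+x)/(1-x))`. Asymptotically this gives `log (3/2) - 1/24 ≈ 0.3638` per unit of `h`.
-/

open Real Finset Filter Topology

section IntegralComparison

variable {F ψ : ℝ → ℝ}

theorem sub_le_sum_Ico_of_hasDerivAt_neg {a b : ℕ} (hab : a ≤ b)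
    (hψ : AntitoneOn ψ (Set.Icc a b)) (hF : ∀ x ∈ Set.Icc (a : ℝ) b, HasDerivAt F (-ψ x) x) :
    F a - F b ≤ ∑ n ∈ Ico a b, ψ n := by
  have hab' : (a : ℝ) ≤ b := Nat.cast_le.2 hab
  calc F a - F b = ∫ x in (a : ℝ)..b, ψ x := by
        rw [← Set.uIcc_of_le hab'] at hF hψ
        rw [intervalIntegral.integral_eq_sub_of_hasDerivAt (f := fun x => -F x)
          (fun x hx => by simpa using (hF x hx).fun_neg) hψ.intervalIntegrable]
        ring
    _ ≤ ∑ n ∈ Ico a b, ψ n := hψ.integral_le_sum_Ico hab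

theorem le_tsum_of_hasDerivAt_neg {k : ℕ}
    (hψ : AntitoneOn ψ (Set.Ici k)) (hF : ∀ x ∈ Set.Ici (k : ℝ), HasDerivAt F (-ψ x) x)
    (hF0 : Tendsto F atTop (𝓝 0)) (hs : Summable fun n : ℕ => if k ≤ n then ψ n else 0) :
    F k ≤ ∑' n : ℕ, if k ≤ n then ψ n else 0 := by
  have hpartial : ∀ N ≥ k, F k - F N ≤ ∑ n ∈ range N, if k ≤ n then ψ n else 0 := by
    intro N hN
    rw [← sum_filter, show (range N).filter (k ≤ ·) = Ico k N by
      ext; simp only [mem_filter, mem_range, mem_Ico]; omega]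
    exact sub_le_sum_Ico_of_hasDerivAt_neg hN (hψ.mono Set.Icc_subset_Ici_self)
      fun x hx => hF x hx.1
  refine le_of_tendsto_of_tendsto ?_ hs.hasSum.tendsto_sum_nat (eventually_atTop.2 ⟨k, hpartial⟩)
  simpa using tendsto_const_nhds.sub (hF0.comp tendsto_natCast_atTop_atTop)

end IntegralComparison

theorem sum_Ioc_ite_le_eq {M : Type*} [AddCommMonoid M] (a b m : ℕ) (c : M) :
    ∑ k ∈ Ioc a b, (if k ≤ m then c else 0) = (min m b - a) • c := by
  rw [← sum_filter, sum_const, show (Ioc a b).filter (· ≤ m) = Ioc a (min m b) by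
    ext; simp only [mem_filter, mem_Ioc]; omega, Nat.card_Ioc]

theorem tsum_min_sub_mul_eq_sum_tsum_ite {f : ℕ → ℝ} (a b : ℕ)
    (hf : ∀ k ∈ Ioc a b, Summable fun m => if k ≤ m then f m else 0) :
    ∑' m, ((min m b - a : ℕ) : ℝ) * f m = ∑ k ∈ Ioc a b, ∑' m, if k ≤ m then f m else 0 := by
  rw [← Summable.tsum_finsetSum hf]
  refine tsum_congr fun m => ?_
  rw [sum_Ioc_ite_le_eq, nsmul_eq_mul]

theorem sum_Ioc_zero_natCast (h : ℕ) : ∑ j ∈ Ioc 0 h, (j : ℝ) = h * (h + 1) / 2 := by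
  induction h with
  | zero => simp
  | succ n ih => rw [sum_Ioc_succ_top (Nat.zero_le n), ih]; push_cast; ring

theorem add_two_mul_pow_three_div_le_log_sub_log {x : ℝ} (hx₀ : 0 ≤ x) (hx₁ : x < 1) :
    2 * x + 2 * x ^ 3 / 3 ≤ log (1 + x) - log (1 - x) := by
  have hs := hasSum_log_sub_log_of_abs_lt_one (by rwa [abs_of_nonneg hx₀])
  calc 2 * x + 2 * x ^ 3 / 3 = ∑ k ∈ range 2, 2 * (1 / (2 * (k : ℝ) + 1)) * x ^ (2 * k + 1) := by
        norm_num [sum_range_succ]; ring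
    _ ≤ _ := sum_le_hasSum (range 2) (fun k _ => by positivity) hs

theorem abs_le_sqrt_sq_add_sq (x y : ℝ) : |y| ≤ √(x ^ 2 + y ^ 2) := by
  rw [← sqrt_sq_eq_abs]; gcongr; nlinarith

noncomputable def dipoleKernel (x y : ℝ) : ℝ := ((x ^ 2 + y ^ 2) ^ ((3 : ℝ) / 2))⁻¹

/-- Closed form of `∫_y^∞ dipoleKernel x t dt`. -/
noncomputable def rayIntegral (x y : ℝ) : ℝ := (√(x ^ 2 + y ^ 2) * (√(x ^ 2 + y ^ 2) + y))⁻¹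

/-- Closed form of `∫_x^∞ rayIntegral s y ds`, the kernel integrated over `[x, ∞) × [y, ∞)`;
the familiar form `(x + y - √(x² + y²)) / (x y)` is rationalized. -/
noncomputable def quadrantIntegral (x y : ℝ) : ℝ := 2 / (x + y + √(x ^ 2 + y ^ 2))

theorem dipoleKernel_eq (x y : ℝ) : dipoleKernel x y = (√(x ^ 2 + y ^ 2) ^ 3)⁻¹ := by
  rw [dipoleKernel, rpow_div_two_eq_sqrt _ (by positivity)]
  norm_cast

theorem dipoleKernel_nonneg (x y : ℝ) : 0 ≤ dipoleKernel x y := by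
  unfold dipoleKernel; positivity

theorem dipoleKernel_antitoneOn (x : ℝ) : AntitoneOn (dipoleKernel x) (Set.Ioi 0) := by
  intro a ha b _ hab
  simp only [Set.mem_Ioi] at ha
  unfold dipoleKernel
  gcongr

theorem dipoleKernel_le_rpow_mul {x y : ℝ} (hx : 0 < x) (hy : 0 < y) :
    dipoleKernel x y ≤ x ^ (-(3 / 2 : ℝ)) * y ^ (-(3 / 2 : ℝ)) := by
  rw [dipoleKernel, ← mul_rpow hx.le hy.le, rpow_neg (by positivity)]
  gcongr
  nlinarith [sq_nonneg (x - y)]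

theorem hasDerivAt_rayIntegral (x : ℝ) {y : ℝ} (hy : 0 < y) :
    HasDerivAt (rayIntegral x) (-dipoleKernel x y) y := by
  set r := √(x ^ 2 + y ^ 2)
  have hr : 0 < r := sqrt_pos.2 (by positivity)
  have hr' : HasDerivAt (fun t => √(x ^ 2 + t ^ 2)) (y / r) y := by
    convert ((hasDerivAt_pow 2 y).const_add (x ^ 2)).sqrt (by positivity) using 1
    field_simp; ring
  refine ((hr'.fun_mul (hr'.fun_add (hasDerivAt_id y))).inv (by dsimp; positivity)).congr_deriv ?_
  rw [dipoleKernel_eq]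
  dsimp only [id]
  field_simp
  ring

theorem tendsto_rayIntegral_atTop (x : ℝ) : Tendsto (rayIntegral x) atTop (𝓝 0) := by
  refine (tendsto_atTop_mono' atTop ?_ (tendsto_pow_atTop two_ne_zero)).inv_tendsto_atTop
  filter_upwards [eventually_ge_atTop 0] with y hy
  have := abs_le_sqrt_sq_add_sq x y
  rw [abs_of_nonneg hy] at this
  nlinarith

theorem rayIntegral_antitoneOn {y : ℝ} (hy : 0 < y) :
    AntitoneOn (fun x => rayIntegral x y) (Set.Ici 0) := by
  intro a ha b _ hab
  simp only [Set.mem_Ici] at ha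
  unfold rayIntegral
  apply inv_anti₀ (by positivity)
  gcongr

theorem rayIntegral_le_inv_sq {x y : ℝ} (hx : x ≠ 0) (hy : 0 ≤ y) :
    rayIntegral x y ≤ (x ^ 2)⁻¹ := by
  have hr := sq_sqrt (by positivity : 0 ≤ x ^ 2 + y ^ 2)
  unfold rayIntegral
  gcongr
  nlinarith [sqrt_nonneg (x ^ 2 + y ^ 2)]

theorem hasDerivAt_quadrantIntegral (x : ℝ) {y : ℝ} (hy : 0 < y) :
    HasDerivAt (fun t => quadrantIntegral t y) (-rayIntegral x y) x := by
  set r := √(x ^ 2 + y ^ 2)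
  have hr : 0 < r := sqrt_pos.2 (by positivity)
  have hr2 : r ^ 2 = x ^ 2 + y ^ 2 := sq_sqrt (by positivity)
  have hxr : 0 < x + y + r := by
    have := abs_le_sqrt_sq_add_sq y x
    rw [add_comm (y ^ 2)] at this
    linarith [neg_abs_le x]
  have hr' : HasDerivAt (fun t => √(t ^ 2 + y ^ 2)) (x / r) x := by
    convert ((hasDerivAt_pow 2 x).add_const (y ^ 2)).sqrt (by positivity) using 1
    field_simp; ring
  refine ((hasDerivAt_const x (2 : ℝ)).div (((hasDerivAt_id x).add_const y).fun_add hr')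
    hxr.ne').congr_deriv ?_
  rw [rayIntegral]
  dsimp only [id]
  rw [show √(x ^ 2 + y ^ 2) = r from rfl]
  field_simp
  linear_combination -hr2

theorem tendsto_quadrantIntegral_atTop (y : ℝ) :
    Tendsto (fun x => quadrantIntegral x y) atTop (𝓝 0) := by
  refine tendsto_const_nhds.div_atTop (tendsto_atTop_mono (fun x => ?_) tendsto_id)
  have := abs_le_sqrt_sq_add_sq x y
  have := neg_abs_le y
  simp only [id]
  linarith

theorem sub_le_quadrantIntegral {x y : ℝ} (hx : 0 ≤ x) (hy : 0 < y) :
    1 / y - x / (2 * y ^ 2) ≤ quadrantIntegral x y := by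
  have hr : √(x ^ 2 + y ^ 2) ≤ y + x ^ 2 / (2 * y) := by
    rw [sqrt_le_left (by positivity)]
    have : (y + x ^ 2 / (2 * y)) ^ 2 = x ^ 2 + y ^ 2 + (x ^ 2 / (2 * y)) ^ 2 := by
      field_simp; ring
    nlinarith [sq_nonneg (x ^ 2 / (2 * y))]
  calc 1 / y - x / (2 * y ^ 2) ≤ 2 / (x + y + (y + x ^ 2 / (2 * y))) := by
        rw [div_sub_div _ _ hy.ne' (by positivity), div_le_div_iff₀ (by positivity) (by positivity)]
        field_simp
        nlinarith [pow_nonneg hx 3]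
    _ ≤ quadrantIntegral x y := by
        unfold quadrantIntegral
        gcongr

theorem ite_dipoleKernel_le {x : ℝ} (hx : 0 < x) {k : ℕ} (hk : 1 ≤ k) (m : ℕ) :
    (if k ≤ m then dipoleKernel x m else 0) ≤ x ^ (-(3 / 2 : ℝ)) * (m : ℝ) ^ (-(3 / 2 : ℝ)) := by
  split_ifs with hm
  · exact dipoleKernel_le_rpow_mul hx (by exact_mod_cast hk.trans hm)
  · positivity

theorem summable_ite_dipoleKernel {x : ℝ} (hx : 0 < x) {k : ℕ} (hk : 1 ≤ k) :
    Summable fun m : ℕ => if k ≤ m then dipoleKernel x m else 0 :=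
  Summable.of_nonneg_of_le (fun m => by split_ifs; exacts [dipoleKernel_nonneg _ _, le_rfl])
    (ite_dipoleKernel_le hx hk) ((summable_nat_rpow.2 (by norm_num)).mul_left _)

theorem tsum_dipoleKernel_le {x : ℝ} (hx : 0 < x) {k : ℕ} (hk : 1 ≤ k) :
    ∑' m : ℕ, (if k ≤ m then dipoleKernel x m else 0)
      ≤ x ^ (-(3 / 2 : ℝ)) * ∑' m : ℕ, (m : ℝ) ^ (-(3 / 2 : ℝ)) := by
  rw [← tsum_mul_left]
  exact (summable_ite_dipoleKernel hx hk).tsum_le_tsum (ite_dipoleKernel_le hx hk)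
    ((summable_nat_rpow.2 (by norm_num)).mul_left _)

theorem rayIntegral_le_tsum_dipoleKernel {x : ℝ} (hx : 0 < x) {k : ℕ} (hk : 1 ≤ k) :
    rayIntegral x k ≤ ∑' m : ℕ, if k ≤ m then dipoleKernel x m else 0 := by
  have hk' : (0 : ℝ) < k := by exact_mod_cast hk
  exact le_tsum_of_hasDerivAt_neg
    ((dipoleKernel_antitoneOn x).mono fun _ hy => hk'.trans_le hy)
    (fun y hy => hasDerivAt_rayIntegral x (hk'.trans_le hy))
    (tendsto_rayIntegral_atTop x) (summable_ite_dipoleKernel hx hk)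

theorem summable_ite_rayIntegral {j : ℕ} (hj : 1 ≤ j) {y : ℝ} (hy : 0 ≤ y) :
    Summable fun n : ℕ => if j ≤ n then rayIntegral n y else 0 := by
  refine Summable.of_nonneg_of_le (fun n => ?_) (fun n => ?_)
    (summable_nat_pow_inv.2 one_lt_two)
  · unfold rayIntegral; positivity
  · split_ifs with hn
    · exact rayIntegral_le_inv_sq (Nat.cast_ne_zero.2 (by omega)) hy
    · positivity

theorem quadrantIntegral_le_tsum_rayIntegral {j : ℕ} (hj : 1 ≤ j) {y : ℝ} (hy : 0 < y) :
    quadrantIntegral j y ≤ ∑' n : ℕ, if j ≤ n then rayIntegral n y else 0 :=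
  le_tsum_of_hasDerivAt_neg ((rayIntegral_antitoneOn hy).mono (Set.Ici_subset_Ici.2 j.cast_nonneg))
    (fun x _ => hasDerivAt_quadrantIntegral x hy) (tendsto_quadrantIntegral_atTop y)
    (summable_ite_rayIntegral hj hy.le)

noncomputable def quadrantTerm (h n : ℕ) : ℝ :=
  min (n : ℝ) (h : ℝ) * ∑' m : ℕ, (if 2 * h < m then
    min ((m : ℝ) - 2 * (h : ℝ)) (h : ℝ) / (((n : ℝ) ^ 2 + (m : ℝ) ^ 2) ^ ((3 : ℝ) / 2)) else 0)

@[simp]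
theorem quadrantTerm_zero (h : ℕ) : quadrantTerm h 0 = 0 := by
  simp [quadrantTerm]

theorem quadrantTerm_eq (h n : ℕ) :
    quadrantTerm h n = min (n : ℝ) h *
      ∑ k ∈ Ioc (2 * h) (3 * h), ∑' m : ℕ, if k ≤ m then dipoleKernel n m else 0 := by
  rcases n.eq_zero_or_pos with rfl | hn
  · simp
  rw [quadrantTerm, ← tsum_min_sub_mul_eq_sum_tsum_ite _ _ fun k hk =>
    summable_ite_dipoleKernel (Nat.cast_pos.2 hn) (by rw [mem_Ioc] at hk; omega)]
  congr 1
  refine tsum_congr fun m => ?_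
  rw [dipoleKernel, ← div_eq_mul_inv]
  split_ifs with hm
  · rw [Nat.cast_sub (by omega), Nat.cast_min, ← min_sub_sub_right]
    push_cast
    ring_nf
  · rw [Nat.sub_eq_zero_of_le (by omega)]
    simp

theorem summable_quadrantTerm (h : ℕ) : Summable (quadrantTerm h) := by
  set Z := ∑' m : ℕ, (m : ℝ) ^ (-(3 / 2 : ℝ))
  have htail (n k : ℕ) : 0 ≤ ∑' m : ℕ, if k ≤ m then dipoleKernel n m else 0 :=
    tsum_nonneg fun m => by split_ifs; exacts [dipoleKernel_nonneg _ _, le_rfl]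
  refine Summable.of_nonneg_of_le (fun n => ?_) (fun n => ?_)
    ((summable_nat_rpow.2 (by norm_num : -(3 / 2 : ℝ) < -1)).mul_left (h * (h * Z)))
  · rw [quadrantTerm_eq]
    exact mul_nonneg (by positivity) (sum_nonneg fun k _ => htail n k)
  rcases n.eq_zero_or_pos with rfl | hn
  · simp [zero_rpow]
  have hn' : (0 : ℝ) < n := Nat.cast_pos.2 hn
  rw [quadrantTerm_eq]
  calc _ ≤ h * ∑ k ∈ Ioc (2 * h) (3 * h), (n : ℝ) ^ (-(3 / 2 : ℝ)) * Z := by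
        gcongr with k hk
        · exact sum_nonneg fun k _ => htail n k
        · exact min_le_right _ _
        · exact tsum_dipoleKernel_le hn' (by rw [mem_Ioc] at hk; omega)
    _ = h * (h * Z) * (n : ℝ) ^ (-(3 / 2 : ℝ)) := by
        rw [sum_const, Nat.card_Ioc, show 3 * h - 2 * h = h by omega, nsmul_eq_mul]
        ring

theorem min_mul_sum_rayIntegral_le_quadrantTerm (h n : ℕ) :
    min (n : ℝ) h * ∑ k ∈ Ioc (2 * h) (3 * h), rayIntegral n k ≤ quadrantTerm h n := by
  rcases n.eq_zero_or_pos with rfl | hn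
  · simp
  rw [quadrantTerm_eq]
  gcongr with k hk
  exact rayIntegral_le_tsum_dipoleKernel (Nat.cast_pos.2 hn) (by rw [mem_Ioc] at hk; omega)

theorem sum_sum_quadrantIntegral_le_tsum (h : ℕ) :
    ∑ j ∈ Ioc 0 h, ∑ k ∈ Ioc (2 * h) (3 * h), quadrantIntegral j k
      ≤ ∑' n : ℕ, min (n : ℝ) h * ∑ k ∈ Ioc (2 * h) (3 * h), rayIntegral n k := by
  have hK : ∀ k ∈ Ioc (2 * h) (3 * h), (0 : ℝ) < k := fun k hk => by
    rw [mem_Ioc] at hk; exact_mod_cast (by omega : 0 < k)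
  have hswap (j n : ℕ) : (if j ≤ n then ∑ k ∈ Ioc (2 * h) (3 * h), rayIntegral n k else 0)
      = ∑ k ∈ Ioc (2 * h) (3 * h), if j ≤ n then rayIntegral n k else 0 := by
    split_ifs <;> simp
  have hmin (n : ℕ) : min (n : ℝ) h = ((min n h - 0 : ℕ) : ℝ) := by simp
  simp_rw [hmin]
  rw [tsum_min_sub_mul_eq_sum_tsum_ite 0 h fun j hj => ?_]
  · gcongr with j hj
    rw [tsum_congr (hswap j), Summable.tsum_finsetSum fun k hk =>
      summable_ite_rayIntegral (mem_Ioc.1 hj).1 (hK k hk).le]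
    gcongr with k hk
    exact quadrantIntegral_le_tsum_rayIntegral (mem_Ioc.1 hj).1 (hK k hk)
  · simp_rw [hswap j]
    exact summable_sum fun k hk => summable_ite_rayIntegral (mem_Ioc.1 hj).1 (hK k hk).le

theorem le_log_sub_log_sub {h : ℝ} (hh : 100 ≤ h) :
    0.36 ≤ log (3 * h + 1) - log (2 * h + 1)
      - (h + 1) / 4 * (1 / (2 * h + 1) - 1 / (3 * h + 1)) := by
  -- `x` is chosen so that `(1 + x) / (1 - x) = (3h + 1) / (2h + 1)`.
  set x := h / (5 * h + 2) with hx_def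
  have hx : 50 / 251 ≤ x := by rw [div_le_div_iff₀ (by norm_num) (by positivity)]; linarith
  have hx1 : x < 1 := by rw [div_lt_one (by positivity)]; linarith
  have hlog : log (1 + x) - log (1 - x) = log (3 * h + 1) - log (2 * h + 1) := by
    rw [← log_div (by positivity) (by linarith), ← log_div (by positivity) (by positivity)]
    congr 1
    have h1 : 5 * h + 2 ≠ 0 := by positivity
    rw [hx_def, one_add_div h1, one_sub_div h1, div_div_div_cancel_right₀ h1,
      div_eq_div_iff (by linarith) (by positivity)]
    ring
  have hseries := add_two_mul_pow_three_div_le_log_sub_log (by positivity) hx1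
  have hcorr : (h + 1) / 4 * (1 / (2 * h + 1) - 1 / (3 * h + 1)) ≤ 1 / 24 + 1 / 14400 := by
    rw [div_sub_div _ _ (by positivity) (by positivity), div_mul_div_comm,
      div_le_iff₀ (by positivity)]
    nlinarith
  nlinarith [pow_le_pow_left₀ (by norm_num) hx 3]

/-- The summand is decreasing for `k ≥ (h + 1) / 2`, with antiderivative
`h log k + h (h + 1) / (4 k)`. -/
theorem mul_log_sub_le_sum_Ioc (h : ℕ) :
    h * (log (3 * h + 1) - log (2 * h + 1) - (h + 1) / 4 * (1 / (2 * h + 1) - 1 / (3 * h + 1)))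
      ≤ ∑ k ∈ Ioc (2 * h) (3 * h), ((h : ℝ) / k - h * (h + 1) / (4 * k ^ 2)) := by
  rw [← Ico_add_one_add_one_eq_Ioc]
  have key := sub_le_sum_Ico_of_hasDerivAt_neg (a := 2 * h + 1) (b := 3 * h + 1) (by omega)
    (F := fun x => -(h * log x + h * (h + 1) / 4 * x⁻¹))
    (ψ := fun x => h / x - h * (h + 1) / (4 * x ^ 2)) ?_ ?_
  · convert key using 1
    push_cast; field_simp; ring
  · intro a ha b hb hab
    simp only [Set.mem_Icc] at ha hb
    push_cast at ha
    have ha0 : 0 < a := by linarith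
    have hinv : 1 / b ≤ 1 / a := one_div_le_one_div_of_le ha0 hab
    have hsmall : ((h : ℝ) + 1) / 4 * (1 / a + 1 / b) ≤ 1 := by
      have : 1 / a ≤ 1 / (2 * h + 1) := one_div_le_one_div_of_le (by positivity) ha.1
      rw [div_mul_eq_mul_div, div_le_one (by norm_num)]
      calc ((h : ℝ) + 1) * (1 / a + 1 / b) ≤ (h + 1) * (2 * (1 / (2 * h + 1))) := by
            gcongr; linarith
        _ ≤ 4 := by rw [mul_one_div, mul_div_assoc', div_le_iff₀ (by positivity)]; linarith
    have expand : ∀ x : ℝ, (h : ℝ) / x - h * (h + 1) / (4 * x ^ 2)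
        = h * (1 / x) - h * (h + 1) / 4 * (1 / x) ^ 2 := fun x => by ring
    simp only [expand]
    nlinarith [mul_nonneg (mul_nonneg h.cast_nonneg (sub_nonneg.2 hinv)) (sub_nonneg.2 hsmall)]
  · intro x hx
    have hx0 : 0 < x := by simp only [Set.mem_Icc] at hx; push_cast at hx; linarith
    refine (((hasDerivAt_log hx0.ne').const_mul (h : ℝ)).fun_add
      ((hasDerivAt_inv hx0.ne').const_mul ((h : ℝ) * (h + 1) / 4))).fun_neg.congr_deriv ?_
    field_simp; ring

theorem le_sum_sum_quadrantIntegral {h : ℕ} (hh : 100 ≤ h) :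
    0.36 * (h : ℝ) ≤ ∑ j ∈ Ioc 0 h, ∑ k ∈ Ioc (2 * h) (3 * h), quadrantIntegral j k := by
  have hK : ∀ k ∈ Ioc (2 * h) (3 * h), (0 : ℝ) < k := fun k hk => by
    rw [mem_Ioc] at hk; exact_mod_cast (by omega : 0 < k)
  calc 0.36 * (h : ℝ)
      ≤ h * (log (3 * h + 1) - log (2 * h + 1)
          - (h + 1) / 4 * (1 / (2 * h + 1) - 1 / (3 * h + 1))) := by
        rw [mul_comm]
        exact mul_le_mul_of_nonneg_left (le_log_sub_log_sub (by exact_mod_cast hh)) h.cast_nonneg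
    _ ≤ ∑ k ∈ Ioc (2 * h) (3 * h), ((h : ℝ) / k - h * (h + 1) / (4 * k ^ 2)) :=
        mul_log_sub_le_sum_Ioc h
    _ = ∑ k ∈ Ioc (2 * h) (3 * h), ∑ j ∈ Ioc 0 h, (1 / (k : ℝ) - j / (2 * k ^ 2)) := by
        refine sum_congr rfl fun k hk => ?_
        have := (hK k hk).ne'
        rw [sum_sub_distrib, sum_const, Nat.card_Ioc, Nat.sub_zero, ← sum_div,
          sum_Ioc_zero_natCast, nsmul_eq_mul]
        field_simp
        ring
    _ = ∑ j ∈ Ioc 0 h, ∑ k ∈ Ioc (2 * h) (3 * h), (1 / (k : ℝ) - j / (2 * k ^ 2)) := sum_comm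
    _ ≤ ∑ j ∈ Ioc 0 h, ∑ k ∈ Ioc (2 * h) (3 * h), quadrantIntegral j k := by
        gcongr with j _ k hk
        exact sub_le_quadrantIntegral j.cast_nonneg (hK k hk)

/-- lower bound on the square–shifted-quadrant interaction:
`(1/h) Σ_{n₁≥1} min{n₁,h} Σ_{n₂>2h} min{n₂−2h,h}/(n₁²+n₂²)^{3/2} ≥ 0.36`. -/
theorem shifted_quadrant_lower_bound :
    ∃ h₀ : ℕ, ∀ h : ℕ, h₀ ≤ h →
    (1/(h:ℝ)) * ∑' n₁ : ℕ+, min (n₁:ℝ) (h:ℝ) *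
        ∑' n₂ : ℕ, (if 2*h < n₂ then
          min ((n₂:ℝ) - 2*(h:ℝ)) (h:ℝ) / (((n₁:ℝ)^2 + (n₂:ℝ)^2) ^ ((3:ℝ)/2))
        else 0)
      ≥ 0.36 := by
  refine ⟨100, fun h hh => ?_⟩
  have hpos : (0 : ℝ) < h := by exact_mod_cast (by omega : 0 < h)
  change 0.36 ≤ 1 / (h : ℝ) * ∑' n : ℕ+, quadrantTerm h n
  rw [← zero_add (∑' n : ℕ+, _), ← quadrantTerm_zero h,
    tsum_zero_pnat_eq_tsum_nat (summable_quadrantTerm h), one_div, le_inv_mul_iff₀' hpos]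
  calc 0.36 * (h : ℝ) ≤ ∑ j ∈ Ioc 0 h, ∑ k ∈ Ioc (2 * h) (3 * h), quadrantIntegral j k :=
        le_sum_sum_quadrantIntegral hh
    _ ≤ ∑' n : ℕ, min (n : ℝ) h * ∑ k ∈ Ioc (2 * h) (3 * h), rayIntegral n k :=
        sum_sum_quadrantIntegral_le_tsum h
    _ ≤ ∑' n : ℕ, quadrantTerm h n :=
        ((summable_quadrantTerm h).of_nonneg_of_le (fun n => by unfold rayIntegral; positivity)
          (min_mul_sum_rayIntegral_le_quadrantTerm h)).tsum_le_tsum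
          (min_mul_sum_rayIntegral_le_quadrantTerm h) (summable_quadrantTerm h)
end

section
/- The function φ(λ) := (2 − log(27/16))·λ + (log(27/16) − 1/3)·λ² − (5/3)·λ³ + λ²·log λ + (1 − λ)·log(1 − λ) satisfies φ(λ) > 0 for every λ ∈ (0, 1/2], and φ(λ) → 0 as λ → 0⁺. -/
open scoped BigOperators
open MeasureTheory

/-- The function appearing in the final lower bound of Lemma 4 of the paper. -/
noncomputable def phiFun (l : ℝ) : ℝ :=
  (2 - Real.log (27/16)) * l + (Real.log (27/16) - 1/3) * l^2 - (5/3) * l^3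
    + l^2 * Real.log l + (1 - l) * Real.log (1 - l)


/-! The two entropy-type terms are bounded below by elementary inequalities: `λ² log λ ≥ -λ/e` and
`(1-λ) log(1-λ) ≥ ((1-λ)² - 1)/2`, the latter being `sinh t ≥ t` at `t = -log(1-λ)`. With
`log(27/16) < 0.535` and `1/e < 0.368` this leaves `φ(λ) ≥ λ·q(λ)` for a quadratic `q` that is
concave and positive at both ends of `[0, 1/2]`. The limit holds because `x ↦ x log x` is continuous
at `0`, so `φ` is continuous with `φ(0) = 0`. -/

namespace Real

lemma sub_inv_le_two_mul_log {u : ℝ} (hu : 0 < u) (hu1 : u ≤ 1) : u - u⁻¹ ≤ 2 * log u := by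
  have h := self_le_sinh_iff.2 (neg_nonneg.2 (log_nonpos hu.le hu1))
  rw [sinh_eq, neg_neg, exp_log hu, exp_neg, exp_log hu] at h
  linarith

lemma sq_sub_one_le_two_mul_mul_log {u : ℝ} (hu : 0 < u) (hu1 : u ≤ 1) :
    u ^ 2 - 1 ≤ 2 * (u * log u) := by
  have h := mul_le_mul_of_nonneg_left (sub_inv_le_two_mul_log hu hu1) hu.le
  rwa [mul_sub, mul_inv_cancel₀ hu.ne', ← sq, mul_left_comm] at h

lemma neg_exp_neg_one_le_mul_log {x : ℝ} (hx : 0 < x) : -exp (-1) ≤ x * log x := by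
  have h := add_one_le_exp (-log x - 1)
  rw [exp_sub, exp_neg, exp_log hx] at h
  have hx' : x * (x⁻¹ / exp 1) = (exp 1)⁻¹ := by field_simp
  rw [exp_neg]
  nlinarith [mul_le_mul_of_nonneg_left h hx.le]

lemma log_27_div_16_lt : log (27 / 16) < 0.535 := by
  have h : 2 * log (27 / 16) = log 2 + 3 * log (9 / 8) := by
    have h2 := log_pow (27 / 16 : ℝ) 2
    have h3 := log_pow (9 / 8 : ℝ) 3
    have hmul := log_mul (x := 2) (y := (9 / 8 : ℝ) ^ 3) (by norm_num) (by norm_num)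
    norm_num at h2 h3 hmul ⊢
    linarith
  have h98 := log_le_sub_one_of_pos (show (0 : ℝ) < 9 / 8 by norm_num)
  linarith [log_two_lt_d9]

lemma exp_neg_one_lt : exp (-1) < 0.368 := by
  rw [exp_neg, inv_lt_comm₀ (exp_pos 1) (by norm_num)]
  linarith [exp_one_gt_d9]

end Real

open Real

lemma le_phiFun {l : ℝ} (hl : 0 < l) (hl1 : l < 1) :
    l * (1 - log (27 / 16) - exp (-1) + (log (27 / 16) + 1 / 6) * l - 5 / 3 * l ^ 2) ≤ phiFun l := by
  have hsq := mul_le_mul_of_nonneg_left (neg_exp_neg_one_le_mul_log hl) hl.le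
  have hent := sq_sub_one_le_two_mul_mul_log (sub_pos.2 hl1) (by linarith)
  unfold phiFun
  nlinarith

lemma continuous_phiFun : Continuous phiFun := by
  -- abstracting `x ↦ x log x` keeps `fun_prop` from splitting off `log`, which is discontinuous at 0
  obtain ⟨g, hg, hphi⟩ : ∃ g : ℝ → ℝ, Continuous g ∧ phiFun = fun l =>
      (2 - log (27 / 16)) * l + (log (27 / 16) - 1 / 3) * l ^ 2 - 5 / 3 * l ^ 3
        + l * g l + g (1 - l) :=
    ⟨_, continuous_mul_log, funext fun l => by unfold phiFun; ring⟩
  rw [hphi]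
  fun_prop

/-- `φ(λ) > 0` on `(0,1/2]` and `φ(λ) → 0` as `λ → 0⁺`. -/
theorem phiFun_pos_and_tendsto_zero :
    (∀ l : ℝ, 0 < l → l ≤ 1/2 → phiFun l > 0) ∧
    Filter.Tendsto phiFun (nhdsWithin 0 (Set.Ioi 0)) (nhds 0) := by
  refine ⟨fun l hl hl2 => ?_, ?_⟩
  · have hc := log_27_div_16_lt
    have he := exp_neg_one_lt
    refine (mul_pos hl ?_).trans_le (le_phiFun hl (by linarith))
    nlinarith [mul_nonneg (sub_nonneg.2 hl2) hl.le, mul_nonneg (sub_nonneg.2 hc.le) hl.le]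
  · have h0 : phiFun 0 = 0 := by simp [phiFun]
    exact (continuous_phiFun.tendsto' 0 0 h0).mono_left nhdsWithin_le_nhds
end
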